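/- arXiv:1208.0492 — 4 statements merged into one kernel-verified Lean document; each statement's English description precedes it below -/
import Mathlib

section
/- Let l ≥ 2 be an integer with l ≡ 2 (mod 4), let p be an odd prime with p ≡ 1 (mod l) such that (p−1)/l is odd, let χ be a multiplicative character of F_p of order l with values in ℂ, and let φ be the quadratic character of F_p. Then N_l(1/2) = p + 2·∑_{i=1}^{(l−2)/4} Re( χ^{−2i}(8) · χ^{2i}(−1) · ( J(χ^i, χ^{2i}) + J(φχ^i, χ^{2i}) ) ), where 1/2 denotes the inverse of 2 in F_p. (This is the second case of the paper's Corollary 3.8, translated via (A choose B) = B(−1)/p · J(A, B̄) and a_p = p − N_l(1/2).) -/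
open Finset

-- cardinality of m-torsion in a cyclic group
lemma aux_card_pow_eq_one {G : Type*} [Group G] [Fintype G] [IsCyclic G] [DecidableEq G]
    {m : ℕ} (hm : m ∣ Fintype.card G) (hm0 : 0 < m) :
    (Finset.univ.filter (fun a : G => a ^ m = 1)).card = m := by
  refine le_antisymm (IsCyclic.card_pow_eq_one_le hm0) ?_
  obtain ⟨g, hg⟩ := IsCyclic.exists_generator (α := G)
  set a : G := g ^ (Fintype.card G / m) with ha
  have hog : orderOf g = Fintype.card G := (orderOf_eq_card_of_forall_mem_zpowers hg).trans (Nat.card_eq_fintype_card)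
  have hcard0 : Fintype.card G ≠ 0 := Fintype.card_ne_zero
  have hoa : orderOf a = m := by
    rw [ha, orderOf_pow, hog, Nat.gcd_eq_right (Nat.div_dvd_of_dvd hm),
      Nat.div_div_self hm hcard0]
  calc m = (Finset.range m).card := (Finset.card_range m).symm
    _ ≤ _ := ?_
  refine Finset.card_le_card_of_injOn (fun k => a ^ k) (fun k hk => ?_) ?_
  · simp only [Finset.mem_coe, Finset.mem_filter, Finset.mem_univ, true_and]
    rw [← pow_mul, mul_comm, pow_mul, ← hoa, pow_orderOf_eq_one, one_pow]
  · intro i hi j hj hij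
    simp only [Finset.mem_coe, Finset.mem_range] at hi hj
    rwa [pow_inj_mod, hoa, Nat.mod_eq_of_lt hi, Nat.mod_eq_of_lt hj] at hij

lemma aux_orderOf_apply_gen {p : ℕ} [Fact p.Prime] (ψ : MulChar (ZMod p) ℂ)
    {g : (ZMod p)ˣ} (hg : ∀ x, x ∈ Subgroup.zpowers g) :
    orderOf (ψ g.val) = orderOf ψ := by
  refine (orderOf_eq_orderOf_iff.mpr fun n => ?_)
  rw [← MulChar.pow_apply_coe, MulChar.eq_iff hg (ψ ^ n) 1, MulChar.one_apply_coe]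

lemma aux_count_roots {p : ℕ} [Fact p.Prime] {m : ℕ} (hm0 : 0 < m)
    (hm : m ∣ p - 1) (ψ : MulChar (ZMod p) ℂ) (hψ : orderOf ψ = m)
    {c : ZMod p} (hc : c ≠ 0) :
    ((Finset.univ.filter (fun y : ZMod p => y ^ m = c)).card : ℂ) =
      ∑ j ∈ Finset.range m, (ψ ^ j) c := by
  obtain ⟨g, hg⟩ := IsCyclic.exists_generator (α := (ZMod p)ˣ)
  have hcu : IsUnit c := isUnit_iff_ne_zero.mpr hc
  have hord : orderOf (ψ g.val) = m := (aux_orderOf_apply_gen ψ hg).trans hψ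
  have hpsim : ψ ^ m = 1 := hψ ▸ pow_orderOf_eq_one ψ
  have hrhs : ∀ j, (ψ ^ j) c = (ψ c) ^ j := by
    intro j
    rw [← hcu.unit_spec, MulChar.pow_apply_coe]
  have hcount : (Finset.univ.filter (fun y : ZMod p => y ^ m = c)).card
      = (Finset.univ.filter (fun u : (ZMod p)ˣ => u ^ m = hcu.unit)).card := by
    refine Eq.symm (Finset.card_bij
      (fun (u : (ZMod p)ˣ) (_ : u ∈ Finset.univ.filter fun u : (ZMod p)ˣ => u ^ m = hcu.unit) =>
        (u : ZMod p)) ?_ ?_ ?_)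
    · intro u hu
      simp only [mem_filter, mem_univ, true_and] at hu ⊢
      rw [← Units.val_pow_eq_pow_val, hu, IsUnit.unit_spec]
    · intro u _ v _ h
      exact Units.ext h
    · intro y hy
      simp only [mem_filter, mem_univ, true_and] at hy
      have hy0 : IsUnit y := by
        refine isUnit_iff_ne_zero.mpr fun h => hc ?_
        rw [← hy, h, zero_pow hm0.ne']
      refine ⟨hy0.unit, ?_, hy0.unit_spec.symm⟩
      simp only [mem_filter, mem_univ, true_and]
      refine Units.ext ?_
      rw [Units.val_pow_eq_pow_val, hy0.unit_spec, IsUnit.unit_spec, hy]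
  by_cases h1 : ψ c = 1
  · obtain ⟨k, hk⟩ : hcu.unit ∈ Submonoid.powers g :=
      mem_powers_iff_mem_zpowers.mpr (hg _)
    have hk' : g ^ k = hcu.unit := hk
    have hck : c = (g.val) ^ k := by
      rw [← IsUnit.unit_spec hcu, ← hk', Units.val_pow_eq_pow_val]
    have hdvd : m ∣ k := by
      rw [← hord]
      refine orderOf_dvd_iff_pow_eq_one.mpr ?_
      rw [← map_pow, ← hck, h1]
    have hRHS : ∑ j ∈ Finset.range m, (ψ ^ j) c = m := by
      simp only [hrhs, h1, one_pow]
      simp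
    rw [hRHS, hcount]
    obtain ⟨t, ht⟩ := hdvd
    set b : (ZMod p)ˣ := g ^ t with hb
    have hbm : b ^ m = hcu.unit := by
      rw [hb, ← pow_mul, mul_comm t m, ← ht, hk']
    have hcc : (Finset.univ.filter (fun u : (ZMod p)ˣ => u ^ m = hcu.unit)).card
        = (Finset.univ.filter (fun u : (ZMod p)ˣ => u ^ m = 1)).card := by
      refine Finset.card_bij
        (fun (u : (ZMod p)ˣ) (_ : u ∈ Finset.univ.filter fun u : (ZMod p)ˣ => u ^ m = hcu.unit)
          => u * b⁻¹) ?_ ?_ ?_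
      · intro u hu
        simp only [mem_filter, mem_univ, true_and] at hu ⊢
        rw [mul_pow, hu, inv_pow, hbm, mul_inv_cancel]
      · intro u _ v _ h
        exact mul_right_cancel h
      · intro w hw
        simp only [mem_filter, mem_univ, true_and] at hw
        refine ⟨w * b, ?_, ?_⟩
        · simp only [mem_filter, mem_univ, true_and]
          rw [mul_pow, hw, one_mul, hbm]
        · rw [mul_inv_cancel_right]
    rw [hcc, aux_card_pow_eq_one
      (by rwa [ZMod.card_units_eq_totient, Nat.totient_prime Fact.out]) hm0]
  · have hLHS : (Finset.univ.filter (fun y : ZMod p => y ^ m = c)).card = 0 := by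
      rw [Finset.card_eq_zero, Finset.filter_eq_empty_iff]
      intro y _ hy
      have hy0 : IsUnit y := by
        refine isUnit_iff_ne_zero.mpr fun h => hc ?_
        rw [← hy, h, zero_pow hm0.ne']
      apply h1
      rw [← hy, map_pow, ← MulChar.pow_apply' ψ hm0.ne', hpsim, MulChar.one_apply hy0]
    have hxm : (ψ c) ^ m = 1 := by
      rw [← MulChar.pow_apply' ψ hm0.ne', hpsim, MulChar.one_apply hcu]
    have hR : ∑ j ∈ Finset.range m, (ψ ^ j) c = 0 := by
      simp only [hrhs]
      rw [geom_sum_eq h1, hxm, sub_self, zero_div]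
    rw [hR, hLHS, Nat.cast_zero]


section
variable {p : ℕ} [Fact p.Prime]

lemma aux_T_odd (ψ : MulChar (ZMod p) ℂ) (hneg : ψ (-1) = -1) :
    ∑ u : ZMod p, ψ (u * (1 - u ^ 2)) = 0 := by
  have key : ∑ u : ZMod p, ψ (u * (1 - u ^ 2))
      = - ∑ u : ZMod p, ψ (u * (1 - u ^ 2)) := by
    have e1 : ∑ u : ZMod p, ψ (u * (1 - u ^ 2))
        = ∑ u : ZMod p, ψ (-1 * (u * (1 - u ^ 2))) := by
      refine Fintype.sum_equiv (Equiv.neg (ZMod p)) _ _ fun u => ?_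
      simp only [Equiv.neg_apply]
      congr 1
      ring
    have e2 : ∀ u : ZMod p, ψ (-1 * (u * (1 - u ^ 2))) = -ψ (u * (1 - u ^ 2)) :=
      fun u => by rw [map_mul, hneg, neg_one_mul]
    nth_rewrite 1 [e1]
    simp only [e2]
    rw [Finset.sum_neg_distrib]
  have := add_self_eq_zero (a := ∑ u : ZMod p, ψ (u * (1 - u ^ 2)))
  rw [← this]
  linear_combination key

lemma aux_T_even (hp2 : p ≠ 2) (χ φ : MulChar (ZMod p) ℂ) (hφ : orderOf φ = 2)
    {i : ℕ} (hi : i ≠ 0) :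
    ∑ u : ZMod p, (χ ^ (2 * i)) (u * (1 - u ^ 2)) =
      (∑ t : ZMod p, (χ ^ i) t * (χ ^ (2 * i)) (1 - t)) +
        ∑ t : ZMod p, (φ * χ ^ i) t * (χ ^ (2 * i)) (1 - t) := by
  have hp : p.Prime := Fact.out
  have h2dvd : 2 ∣ p - 1 := by
    have := Nat.odd_iff.mp (hp.odd_of_ne_two hp2)
    omega
  have hcount : ∀ v : ZMod p, v ≠ 0 →
      ((Finset.univ.filter (fun u : ZMod p => u ^ 2 = v)).card : ℂ) = 1 + φ v := by
    intro v hv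
    rw [aux_count_roots (by norm_num) h2dvd φ hφ hv]
    rw [Finset.sum_range_succ, Finset.sum_range_one, pow_zero, pow_one,
      MulChar.one_apply (isUnit_iff_ne_zero.mpr hv)]
  set h : ZMod p → ℂ := fun v => (χ ^ i) v * (χ ^ (2 * i)) (1 - v) with hh
  have step1 : ∑ u : ZMod p, (χ ^ (2 * i)) (u * (1 - u ^ 2)) = ∑ u : ZMod p, h (u ^ 2) := by
    refine Fintype.sum_congr _ _ fun u => ?_
    rw [hh, map_mul]
    congr 1
    rw [MulChar.pow_apply' χ (by omega) u, MulChar.pow_apply' χ hi (u ^ 2),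
      map_pow, ← pow_mul]
  have step2 : ∑ u : ZMod p, h (u ^ 2)
      = ∑ v : ZMod p, ((Finset.univ.filter (fun u : ZMod p => u ^ 2 = v)).card : ℂ) * h v := by
    rw [← Finset.sum_fiberwise_of_maps_to' (g := fun u : ZMod p => u ^ 2)
      (fun u _ => Finset.mem_univ _) h]
    refine Fintype.sum_congr _ _ fun v => ?_
    rw [Finset.sum_const, nsmul_eq_mul]
  have step3 : ∑ v : ZMod p, ((Finset.univ.filter (fun u : ZMod p => u ^ 2 = v)).card : ℂ) * h v
      = ∑ v : ZMod p, (1 + φ v) * h v := by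
    refine Fintype.sum_congr _ _ fun v => ?_
    by_cases hv : v = 0
    · have : h v = 0 := by
        rw [hh, hv]
        simp only [MulChar.map_zero, zero_mul]
      rw [this, mul_zero, mul_zero]
    · rw [hcount v hv]
  rw [step1, step2, step3]
  rw [← Finset.sum_add_distrib]
  refine Fintype.sum_congr _ _ fun v => ?_
  rw [hh, MulChar.mul_apply]
  ring

end


section
variable {p : ℕ} [Fact p.Prime]

lemma aux_orderOf_apply_gen' (ψ : MulChar (ZMod p) ℂ)
    {g : (ZMod p)ˣ} (hg : ∀ x, x ∈ Subgroup.zpowers g) :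
    orderOf (ψ g.val) = orderOf ψ := by
  refine (orderOf_eq_orderOf_iff.mpr fun n => ?_)
  rw [← MulChar.pow_apply_coe, MulChar.eq_iff hg (ψ ^ n) 1, MulChar.one_apply_coe]

lemma aux_gen_pow_half (hp2 : p ≠ 2) {g : (ZMod p)ˣ} (hg : ∀ x, x ∈ Subgroup.zpowers g) :
    g ^ ((p - 1) / 2) = (-1 : (ZMod p)ˣ) := by
  have hp : p.Prime := Fact.out
  have h2 : 2 ∣ p - 1 := by
    have := Nat.odd_iff.mp (hp.odd_of_ne_two hp2)
    omega
  have hog : orderOf g = p - 1 := by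
    rw [orderOf_eq_card_of_forall_mem_zpowers hg, Nat.card_eq_fintype_card,
      ZMod.card_units_eq_totient, Nat.totient_prime hp]
  have hp1 : 0 < p - 1 := by have := hp.two_le; omega
  set x := g ^ ((p - 1) / 2) with hx
  have hx2 : x ^ 2 = 1 := by
    rw [hx, ← pow_mul, Nat.div_mul_cancel h2, ← hog, pow_orderOf_eq_one]
  have hx1 : x ≠ 1 := by
    intro h
    have := orderOf_dvd_of_pow_eq_one (n := (p - 1) / 2) (by rw [← hx, h])
    rw [hog] at this
    have := Nat.le_of_dvd (by omega) this
    omega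
  have hval : (x : ZMod p) ^ 2 = 1 := by
    rw [← Units.val_pow_eq_pow_val, hx2, Units.val_one]
  rcases sq_eq_one_iff.mp hval with h | h
  · exact absurd (Units.ext h) hx1
  · exact Units.ext (by rw [h, Units.val_neg, Units.val_one])

lemma aux_chi_neg_one {l : ℕ} (hp2 : p ≠ 2) (hl2 : l % 2 = 0) (hl0 : 0 < l)
    (hdvd : l ∣ p - 1) (hq : Odd ((p - 1) / l))
    (χ : MulChar (ZMod p) ℂ) (hχ : orderOf χ = l)
    {g : (ZMod p)ˣ} (hg : ∀ x, x ∈ Subgroup.zpowers g) :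
    χ (-1) = -1 ∧ (χ g.val) ^ (l / 2) = -1 := by
  have hp : p.Prime := Fact.out
  set ζ := χ g.val with hζ
  have hordζ : orderOf ζ = l := (aux_orderOf_apply_gen' χ hg).trans hχ
  have hhalf : ζ ^ (l / 2) = -1 := by
    have h1 : (ζ ^ (l / 2)) ^ 2 = 1 := by
      rw [← pow_mul, Nat.div_mul_cancel (Nat.dvd_of_mod_eq_zero hl2), ← hordζ,
        pow_orderOf_eq_one]
    have h2 : ζ ^ (l / 2) ≠ 1 := by
      intro h
      have := orderOf_dvd_of_pow_eq_one h
      rw [hordζ] at this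
      have := Nat.le_of_dvd (by omega) this
      omega
    rcases sq_eq_one_iff.mp h1 with h | h
    · exact absurd h h2
    · exact h
  refine ⟨?_, hhalf⟩
  -- (-1 : ZMod p) = (g ^ ((p-1)/2)).val
  have hneg : ((-1 : (ZMod p)ˣ) : ZMod p) = (-1 : ZMod p) := by
    rw [Units.val_neg, Units.val_one]
  have : χ (-1) = ζ ^ ((p - 1) / 2) := by
    rw [← hneg, ← aux_gen_pow_half hp2 hg, Units.val_pow_eq_pow_val, map_pow]
  rw [this]
  -- (p-1)/2 = (l/2) * ((p-1)/l)
  obtain ⟨q, hpq⟩ := hdvd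
  have hq' : q = (p - 1) / l := by rw [hpq, Nat.mul_div_cancel_left _ hl0]
  have hsplit : (p - 1) / 2 = (l / 2) * q := by
    obtain ⟨l2, hl2'⟩ := Nat.dvd_of_mod_eq_zero hl2
    subst hl2'
    rw [hpq, Nat.mul_div_cancel_left _ (by norm_num : 0 < 2)]
    have : 2 * l2 * q = 2 * (l2 * q) := by ring
    rw [this]
    omega
  rw [hsplit, pow_mul, hhalf]
  exact Odd.neg_one_pow (hq' ▸ hq)

lemma aux_phi_eq {l : ℕ} (hp2 : p ≠ 2) (hl2 : l % 2 = 0) (hl0 : 0 < l)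
    (hdvd : l ∣ p - 1) (hq : Odd ((p - 1) / l))
    (χ φ : MulChar (ZMod p) ℂ) (hχ : orderOf χ = l) (hφ : orderOf φ = 2)
    {g : (ZMod p)ˣ} (hg : ∀ x, x ∈ Subgroup.zpowers g) :
    φ = χ ^ (l / 2) := by
  have hφg : orderOf (φ g.val) = 2 := (aux_orderOf_apply_gen' φ hg).trans hφ
  have h1 : φ g.val ^ 2 = 1 := by rw [← hφg, pow_orderOf_eq_one]
  have h2 : φ g.val ≠ 1 := by
    intro h
    rw [orderOf_eq_one_iff.mpr h] at hφg
    omega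
  have hφval : φ g.val = -1 := by
    rcases sq_eq_one_iff.mp h1 with h | h
    · exact absurd h h2
    · exact h
  have hχval := (aux_chi_neg_one hp2 hl2 hl0 hdvd hq χ hχ hg).2
  rw [MulChar.eq_iff hg, hφval, MulChar.pow_apply_coe, hχval]

end


section
variable {p : ℕ} [Fact p.Prime]

-- substitution x = (u+1)/2
lemma aux_subst (hp2 : p ≠ 2) (ψ : MulChar (ZMod p) ℂ) :
    ∑ x : ZMod p, ψ (x * (x - 1) * (x - (2 : ZMod p)⁻¹)) =
      ψ (-1) * ψ⁻¹ 8 * ∑ u : ZMod p, ψ (u * (1 - u ^ 2)) := by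
  have h2 : (2 : ZMod p) ≠ 0 := by
    intro h
    have : ((2 : ℕ) : ZMod p) = 0 := by exact_mod_cast h
    rw [ZMod.natCast_eq_zero_iff] at this
    have hp : p.Prime := Fact.out
    rcases (Nat.prime_dvd_prime_iff_eq hp Nat.prime_two).mp this with h
    exact hp2 h
  have hbij : Function.Bijective (fun u : ZMod p => (u + 1) * 2⁻¹) := by
    refine Function.bijective_iff_has_inverse.mpr ⟨fun x => x * 2 - 1, fun u => ?_, fun x => ?_⟩
    · field_simp
      ring
    · field_simp
      ring
  rw [← Function.Bijective.sum_comp hbij (fun x => ψ (x * (x - 1) * (x - (2 : ZMod p)⁻¹)))]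
  rw [Finset.mul_sum]
  refine Fintype.sum_congr _ _ fun u => ?_
  have h8 : (8 : ZMod p) ≠ 0 := by
    have : (8 : ZMod p) = 2 ^ 3 := by norm_num
    rw [this]
    exact pow_ne_zero 3 h2
  rw [MulChar.inv_apply' ψ 8, ← map_mul, ← map_mul]
  congr 1
  field_simp
  ring
end





/-- second case of Corollary 3.8: For `l ≥ 2` with `l ≡ 2 (mod 4)`,
an odd prime `p ≡ 1 (mod l)` with `(p−1)/l` odd, `χ` of order `l`, and `φ` the
quadratic character,
`N_l(1/2) = p + 2 ∑_{i=1}^{(l−2)/4} Re(χ^{−2i}(8) χ^{2i}(−1)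
  (J(χ^i, χ^{2i}) + J(φχ^i, χ^{2i})))`. -/
theorem point_count_half_odd_two_mod_four (p : ℕ) [Fact p.Prime] (hp2 : p ≠ 2)
    (l : ℕ) (hl : 2 ≤ l) (hl4 : l % 4 = 2) (hpl : p % l = 1)
    (hodd : Odd ((p - 1) / l))
    (χ φ : MulChar (ZMod p) ℂ) (hχ : orderOf χ = l) (hφ : orderOf φ = 2) :
    ((Finset.univ.filter
        (fun v : ZMod p × ZMod p =>
          v.2 ^ l = v.1 * (v.1 - 1) * (v.1 - (2 : ZMod p)⁻¹))).card : ℂ) =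
      p + 2 * ∑ i ∈ Finset.Icc 1 ((l - 2) / 4),
          ((((χ ^ (2 * i))⁻¹ 8 * (χ ^ (2 * i)) (-1) *
              ((∑ t : ZMod p, (χ ^ i) t * (χ ^ (2 * i)) (1 - t)) +
                ∑ t : ZMod p, (φ * χ ^ i) t * (χ ^ (2 * i)) (1 - t))).re : ℝ) : ℂ) := by
  classical
  have hp : p.Prime := Fact.out
  have hppos : 2 ≤ p := hp.two_le
  have hdvd : l ∣ p - 1 := ⟨p / l, by have := Nat.div_add_mod p l; omega⟩
  have hl0 : 0 < l := by omega
  have hl2 : l % 2 = 0 := by omega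
  obtain ⟨g, hg⟩ := IsCyclic.exists_generator (α := (ZMod p)ˣ)
  have hχneg : χ (-1) = -1 := (aux_chi_neg_one hp2 hl2 hl0 hdvd hodd χ hχ hg).1
  set k := (l - 2) / 4 with hk
  have hlk : l = 4 * k + 2 := by omega
  set f : ZMod p → ZMod p := fun x => x * (x - 1) * (x - (2 : ZMod p)⁻¹) with hf
  set S : ℕ → ℂ := fun j => ∑ x : ZMod p, (χ ^ j) (x * (x - 1) * (x - (2 : ZMod p)⁻¹)) with hS
  set E : ℕ → ℂ := fun i => (χ ^ (2 * i))⁻¹ 8 * (χ ^ (2 * i)) (-1) *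
              ((∑ t : ZMod p, (χ ^ i) t * (χ ^ (2 * i)) (1 - t)) +
                ∑ t : ZMod p, (φ * χ ^ i) t * (χ ^ (2 * i)) (1 - t)) with hE
  -- step A: fiberwise count
  have stepA : (Finset.univ.filter
        (fun v : ZMod p × ZMod p =>
          v.2 ^ l = v.1 * (v.1 - 1) * (v.1 - (2 : ZMod p)⁻¹))).card
      = ∑ x : ZMod p, (Finset.univ.filter (fun y : ZMod p => y ^ l = f x)).card := by
    rw [Finset.card_filter, Fintype.sum_prod_type]
    exact Fintype.sum_congr _ _ fun x => (Finset.card_filter _ _).symm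
  -- step B: per-x count
  have hcard1 : ∀ x : ZMod p,
      ((Finset.univ.filter (fun y : ZMod p => y ^ l = f x)).card : ℂ)
        = (if f x = 0 then 1 else 0) + ∑ j ∈ Finset.range l, (χ ^ j) (f x) := by
    intro x
    by_cases hx : f x = 0
    · rw [if_pos hx, hx]
      have h1 : (Finset.univ.filter (fun y : ZMod p => y ^ l = (0 : ZMod p))) = {0} := by
        ext y
        simp [pow_eq_zero_iff hl0.ne']
      rw [h1, Finset.card_singleton]
      have h2 : ∑ j ∈ Finset.range l, (χ ^ j) (0 : ZMod p) = 0 :=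
        Finset.sum_eq_zero fun j _ => MulChar.map_zero _
      rw [h2]
      norm_num
    · rw [if_neg hx, aux_count_roots hl0 hdvd χ hχ hx, zero_add]
  -- main1: N = p + sum over j in [1,l)
  have main1 : ((Finset.univ.filter
        (fun v : ZMod p × ZMod p =>
          v.2 ^ l = v.1 * (v.1 - 1) * (v.1 - (2 : ZMod p)⁻¹))).card : ℂ)
      = p + ∑ j ∈ Finset.Ico 1 l, S j := by
    rw [stepA, Nat.cast_sum]
    simp only [hcard1]
    rw [Finset.sum_add_distrib, Finset.sum_comm]
    rw [Finset.range_eq_Ico, Finset.sum_eq_sum_Ico_succ_bot hl0]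
    have hAB : (∑ x : ZMod p, if f x = 0 then (1:ℂ) else 0)
        + (∑ x : ZMod p, (χ ^ 0) (f x)) = p := by
      rw [← Finset.sum_add_distrib]
      have hone : ∀ x : ZMod p, (if f x = 0 then (1:ℂ) else 0) + (χ ^ 0) (f x) = 1 := by
        intro x
        by_cases hx : f x = 0
        · rw [if_pos hx, hx, pow_zero, MulChar.map_zero, add_zero]
        · rw [if_neg hx, pow_zero, MulChar.one_apply (isUnit_iff_ne_zero.mpr hx), zero_add]
      rw [Fintype.sum_congr _ _ hone, Finset.sum_const, Finset.card_univ, ZMod.card,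
        nsmul_eq_mul, mul_one]
    have hSj : ∀ j, ∑ x : ZMod p, (χ ^ j) (f x) = S j := fun j => rfl
    simp only [hSj] at *
    linear_combination hAB
  rw [main1]
  -- odd terms vanish
  have hodd_vanish : ∀ j, j % 2 = 1 → S j = 0 := by
    intro j hj
    have hneg : (χ ^ j) (-1) = -1 := by
      rw [MulChar.pow_apply' χ (by omega) (-1), hχneg, Odd.neg_one_pow (Nat.odd_iff.mpr hj)]
    have : S j = (χ ^ j) (-1) * (χ ^ j)⁻¹ 8 * ∑ u : ZMod p, (χ ^ j) (u * (1 - u ^ 2)) :=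
      aux_subst hp2 (χ ^ j)
    rw [this, aux_T_odd _ hneg, mul_zero]
  -- even reindex
  have step_even : ∑ j ∈ Finset.Ico 1 l, S j = ∑ i ∈ Finset.Icc 1 (2 * k), S (2 * i) := by
    rw [← Finset.sum_filter_of_ne (p := fun j => j % 2 = 0)
      (fun j _ hne => by by_contra h; exact hne (hodd_vanish j (by omega)))]
    refine Finset.sum_nbij' (fun j => j / 2) (fun i => 2 * i) ?_ ?_ ?_ ?_ ?_
    · intro j hj
      simp only [Finset.mem_filter, Finset.mem_Ico] at hj
      simp only [Finset.mem_Icc]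
      omega
    · intro i hi
      simp only [Finset.mem_Icc] at hi
      simp only [Finset.mem_filter, Finset.mem_Ico]
      omega
    · intro j hj
      simp only [Finset.mem_filter, Finset.mem_Ico] at hj
      beta_reduce
      omega
    · intro i hi
      simp only [Finset.mem_Icc] at hi
      beta_reduce
      omega
    · intro j hj
      simp only [Finset.mem_filter, Finset.mem_Ico] at hj
      congr 1
      beta_reduce
      omega
  rw [step_even]
  -- S (2 i) = E i
  have hSE : ∀ i, 1 ≤ i → S (2 * i) = E i := by
    intro i h1
    have h0 : i ≠ 0 := by omega
    have : S (2 * i) = (χ ^ (2 * i)) (-1) * (χ ^ (2 * i))⁻¹ 8 *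
        ∑ u : ZMod p, (χ ^ (2 * i)) (u * (1 - u ^ 2)) := aux_subst hp2 (χ ^ (2 * i))
    rw [this, aux_T_even hp2 χ φ hφ h0, hE]
    ring
  -- character identities for pairing
  have hχl : χ ^ l = 1 := hχ ▸ pow_orderOf_eq_one χ
  have hφ2 : φ * φ = 1 := by
    have := pow_orderOf_eq_one φ
    rwa [hφ, pow_two] at this
  have hφinv : φ⁻¹ = φ := inv_eq_of_mul_eq_one_right hφ2
  have hφχ : φ = χ ^ (2 * k + 1) := by
    have := aux_phi_eq hp2 hl2 hl0 hdvd hodd χ φ hχ hφ hg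
    rwa [show l / 2 = 2 * k + 1 by omega] at this
  -- pairing
  have hpair : ∀ i, 1 ≤ i → i ≤ k → E (2 * k + 1 - i) = starRingEnd ℂ (E i) := by
    intro i h1 h2
    have hA : χ ^ (2 * (2 * k + 1 - i)) = (χ ^ (2 * i))⁻¹ := by
      refine (eq_inv_of_mul_eq_one_right ?_)
      rw [← pow_add, show 2 * i + 2 * (2 * k + 1 - i) = l by omega, hχl]
    have hB : χ ^ (2 * k + 1 - i) = (χ ^ i)⁻¹ * φ := by
      have hmul : χ ^ i * χ ^ (2 * k + 1 - i) = φ := by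
        rw [← pow_add, show i + (2 * k + 1 - i) = 2 * k + 1 by omega, hφχ]
      rw [eq_inv_mul_iff_mul_eq]
      exact hmul
    have hswap : φ * ((χ ^ i)⁻¹ * φ) = (χ ^ i)⁻¹ := by
      rw [mul_comm ((χ ^ i)⁻¹) φ, ← mul_assoc, hφ2, one_mul]
    have hmulinv : (φ * χ ^ i)⁻¹ = (χ ^ i)⁻¹ * φ := by
      rw [mul_inv, hφinv, mul_comm]
    simp only [hE]
    rw [map_mul, map_mul, map_add, map_sum, map_sum]
    simp only [map_mul, starRingEnd_apply, MulChar.star_apply']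
    simp only [hA, hB, hswap, hmulinv, inv_inv]
    ring
  -- split the sum and pair up
  have hsplit : ∑ i ∈ Finset.Icc 1 (2 * k), E i
      = ∑ i ∈ Finset.Icc 1 k, (E i + E (2 * k + 1 - i)) := by
    have h1 : Finset.Icc 1 (2 * k) = Finset.Ioc 0 (2 * k) := by
      rw [← Finset.Icc_add_one_left_eq_Ioc]
      rfl
    have h2 : Finset.Icc 1 k = Finset.Ioc 0 k := by
      rw [← Finset.Icc_add_one_left_eq_Ioc]
      rfl
    have h3 : Finset.Icc (k + 1) (2 * k) = Finset.Ioc k (2 * k) := by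
      rw [← Finset.Icc_add_one_left_eq_Ioc]
    rw [h1, h2, ← Finset.sum_Ioc_consecutive _ (Nat.zero_le k) (by omega : k ≤ 2 * k)]
    congr 1
    rw [Finset.sum_add_distrib]
    congr 1
    refine Finset.sum_nbij' (fun j => 2 * k + 1 - j) (fun i => 2 * k + 1 - i) ?_ ?_ ?_ ?_ ?_
    · intro j hj
      simp only [Finset.mem_Ioc] at hj ⊢
      omega
    · intro i hi
      simp only [Finset.mem_Ioc] at hi ⊢
      omega
    · intro j hj
      simp only [Finset.mem_Ioc] at hj
      beta_reduce
      omega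
    · intro i hi
      simp only [Finset.mem_Ioc] at hi
      beta_reduce
      omega
    · intro j hj
      simp only [Finset.mem_Ioc] at hj
      congr 1
      beta_reduce
      omega
  have hEsum : ∀ i ∈ Finset.Icc 1 k, S (2 * i) = E i := by
    intro i hi
    simp only [Finset.mem_Icc] at hi
    exact hSE i hi.1
  calc (p : ℂ) + ∑ i ∈ Finset.Icc 1 (2 * k), S (2 * i)
      = p + ∑ i ∈ Finset.Icc 1 (2 * k), E i := by
        congr 1
        refine Finset.sum_congr rfl fun i hi => ?_
        simp only [Finset.mem_Icc] at hi
        exact hSE i hi.1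
    _ = p + ∑ i ∈ Finset.Icc 1 k, (E i + E (2 * k + 1 - i)) := by rw [hsplit]
    _ = p + ∑ i ∈ Finset.Icc 1 k, (2 * (((E i).re : ℝ) : ℂ)) := by
        congr 1
        refine Finset.sum_congr rfl fun i hi => ?_
        simp only [Finset.mem_Icc] at hi
        rw [hpair i hi.1 hi.2, Complex.add_conj]
        push_cast
        ring
    _ = p + 2 * ∑ i ∈ Finset.Icc 1 k, (((E i).re : ℝ) : ℂ) := by
        rw [Finset.mul_sum]
end

section
/- Let l ≥ 5 be an odd integer, let p be an odd prime with p ≡ 1 (mod l) such that (p−1)/l is even, let χ be a multiplicative character of F_p of order l with values in ℂ, let ψ be a multiplicative character of F_p of order 2l with ψ² = χ, and let φ be the quadratic character of F_p. Then N_l(1/2) = p + 2·∑_{i=1}^{(l−1)/2} Re( ψ^{−2i}(8) · ψ^{2i}(−1) · ( J(ψ^i, ψ^{2i}) + J(φψ^i, ψ^{2i}) ) ), where 1/2 denotes the inverse of 2 in F_p. (This is the fourth case of the paper's Corollary 3.8, translated via (A choose B) = B(−1)/p · J(A, B̄) and a_p = p − N_l(1/2).) -/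
open Finset

section Aux
variable {p : ℕ} [Fact p.Prime]

private lemma mulchar_pow_eq_one_iff {g : (ZMod p)ˣ}
    (hg : ∀ x : (ZMod p)ˣ, x ∈ Subgroup.zpowers g) (χ : MulChar (ZMod p) ℂ) (n : ℕ) :
    χ ^ n = 1 ↔ (χ g.val) ^ n = 1 := by
  rcases Nat.eq_zero_or_pos n with rfl | hn
  · simp
  · rw [MulChar.eq_iff hg, MulChar.pow_apply' χ hn.ne', MulChar.one_apply_coe]

private lemma orderOf_apply_gen {g : (ZMod p)ˣ}
    (hg : ∀ x : (ZMod p)ˣ, x ∈ Subgroup.zpowers g) (χ : MulChar (ZMod p) ℂ) :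
    orderOf (χ g.val) = orderOf χ := by
  rw [orderOf_eq_orderOf_iff]
  intro n
  exact (mulchar_pow_eq_one_iff hg χ n).symm

private lemma char_eq_one_iff_pow {g : (ZMod p)ˣ}
    (hg : ∀ x : (ZMod p)ˣ, x ∈ Subgroup.zpowers g)
    (χ : MulChar (ZMod p) ℂ) {c : ZMod p} (hc : c ≠ 0) :
    χ c = 1 ↔ ∃ y : ZMod p, y ^ orderOf χ = c := by
  have hn : orderOf χ ≠ 0 := χ.orderOf_pos.ne'
  constructor
  · intro h
    lift c to (ZMod p)ˣ using hc.isUnit with u hu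
    obtain ⟨k, hk⟩ := (Submonoid.mem_powers_iff _ _).mp
      ((mem_powers_iff_mem_zpowers).mpr (hg u))
    have hχu : (χ g.val) ^ k = 1 := by
      rw [← map_pow, ← Units.val_pow_eq_pow_val, hk]; exact h
    have hdvd : orderOf χ ∣ k := by
      rw [← orderOf_apply_gen hg χ]
      exact orderOf_dvd_of_pow_eq_one hχu
    obtain ⟨m, hm⟩ := hdvd
    refine ⟨((g ^ m : (ZMod p)ˣ) : ZMod p), ?_⟩
    rw [← Units.val_pow_eq_pow_val, ← pow_mul, mul_comm, ← hm, hk]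
  · rintro ⟨y, rfl⟩
    have hy : y ≠ 0 := by
      intro h; rw [h, zero_pow hn] at hc; exact hc rfl
    rw [map_pow, ← MulChar.pow_apply' χ hn, pow_orderOf_eq_one,
      MulChar.one_apply hy.isUnit]


private lemma count_pow_eq {g : (ZMod p)ˣ}
    (hg : ∀ x : (ZMod p)ˣ, x ∈ Subgroup.zpowers g)
    (χ : MulChar (ZMod p) ℂ) (c : ZMod p) :
    ((Finset.univ.filter (fun y : ZMod p => y ^ orderOf χ = c)).card : ℂ) =
      (if c = 0 then 1 else 0) + ∑ j ∈ Finset.range (orderOf χ), (χ ^ j) c := by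
  classical
  have hn : orderOf χ ≠ 0 := χ.orderOf_pos.ne'
  set n := orderOf χ
  rcases eq_or_ne c 0 with rfl | hc
  · have hfilt : Finset.univ.filter (fun y : ZMod p => y ^ n = 0) = {0} := by
      ext y
      simp [pow_eq_zero_iff hn]
    rw [hfilt]
    simp only [Finset.card_singleton, if_pos rfl, Nat.cast_one]
    have : ∀ j ∈ Finset.range n, (χ ^ j) (0 : ZMod p) = 0 := by
      intro j _
      exact MulChar.map_zero _
    rw [Finset.sum_congr rfl this, Finset.sum_const_zero, add_zero]
    simp
  · -- c ≠ 0
    lift c to (ZMod p)ˣ using hc.isUnit with u hu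
    have hc' : (u : ZMod p) ≠ 0 := hc
    have hsum : ∑ j ∈ Finset.range n, (χ ^ j) (u : ZMod p)
        = ∑ j ∈ Finset.range n, (χ (u : ZMod p)) ^ j := by
      refine Finset.sum_congr rfl fun j _ => ?_
      exact MulChar.pow_apply_coe χ j u
    rw [hsum, if_neg hc]
    rw [zero_add]
    have hpow1 : (χ (u : ZMod p)) ^ n = 1 := by
      rw [← MulChar.pow_apply' χ hn, pow_orderOf_eq_one, MulChar.one_apply_coe]
    by_cases hz : χ (u : ZMod p) = 1
    · -- solvable case: count = n
      obtain ⟨α, hα⟩ := (char_eq_one_iff_pow hg χ hc).mp hz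
      have hα0 : α ≠ 0 := by
        intro h; rw [h, zero_pow hn] at hα; exact hc hα.symm
      -- primitive n-th root of unity in ZMod p
      have hdvd : n ∣ p - 1 := by
        have := MulChar.orderOf_dvd_card_sub_one (ZMod p) χ
        rwa [ZMod.card] at this
      have hgord : orderOf g = p - 1 := by
        rw [orderOf_eq_card_of_forall_mem_zpowers hg, Nat.card_eq_fintype_card, ZMod.card_units]
      have hp1 : p - 1 ≠ 0 := by
        have := (Fact.out : p.Prime).two_le; omega
    -- ζ
      have hζord : orderOf (g ^ ((p - 1) / n)) = n := by
        rw [← hgord] at hdvd ⊢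
        exact orderOf_pow_orderOf_div (by rw [hgord]; exact hp1) hdvd
      have hprim : IsPrimitiveRoot ((g ^ ((p - 1) / n) : (ZMod p)ˣ) : ZMod p) n := by
        rw [IsPrimitiveRoot.coe_units_iff]
        have h' := IsPrimitiveRoot.orderOf (g ^ ((p - 1) / n))
        rwa [hζord] at h'
      have hfilt : Finset.univ.filter (fun y : ZMod p => y ^ n = (u : ZMod p))
          = (Polynomial.nthRootsFinset n (1 : ZMod p)).image (· * α) := by
        ext y
        simp only [Finset.mem_filter, Finset.mem_univ, true_and, Finset.mem_image]
        constructor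
        · intro hy
          refine ⟨y * α⁻¹, ?_, by field_simp⟩
          rw [Polynomial.mem_nthRootsFinset (Nat.pos_of_ne_zero hn)]
          rw [mul_pow, hy, inv_pow, hα]
          field_simp
        · rintro ⟨z, hz, rfl⟩
          rw [Polynomial.mem_nthRootsFinset (Nat.pos_of_ne_zero hn)] at hz
          rw [mul_pow, hz, one_mul, hα]
      rw [hfilt, Finset.card_image_of_injective _ (mul_left_injective₀ hα0),
        hprim.card_nthRootsFinset]
      rw [Finset.sum_congr rfl fun j _ => by rw [hz]]
      simp
    · -- unsolvable: count = 0
      have hfilt : Finset.univ.filter (fun y : ZMod p => y ^ n = (u : ZMod p)) = ∅ := by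
        rw [Finset.filter_eq_empty_iff]
        intro y _
        intro hy
        exact hz ((char_eq_one_iff_pow hg χ hc).mpr ⟨y, hy⟩)
      rw [hfilt, geom_sum_eq hz, hpow1]
      simp

private lemma key_sum (hp2 : p ≠ 2) {g : (ZMod p)ˣ}
    (hg : ∀ x : (ZMod p)ˣ, x ∈ Subgroup.zpowers g)
    (A B φ : MulChar (ZMod p) ℂ) (hφ : orderOf φ = 2) (hB : B ^ 2 = A) :
    ∑ x : ZMod p, A (x * (x - 1) * (x - (2 : ZMod p)⁻¹)) =
      A⁻¹ 8 * A (-1) *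
        ((∑ t : ZMod p, B t * A (1 - t)) + ∑ t : ZMod p, (φ * B) t * A (1 - t)) := by
  classical
  have h2 : (2 : ZMod p) ≠ 0 := by
    intro h
    have h' : ((2 : ℕ) : ZMod p) = 0 := by exact_mod_cast h
    rw [ZMod.natCast_eq_zero_iff] at h'
    exact hp2 ((Nat.prime_dvd_prime_iff_eq Fact.out Nat.prime_two).mp h')
  set lam : ZMod p := (2 : ZMod p)⁻¹ with hlam_def
  have hlam : lam + lam = 1 := by
    rw [hlam_def, ← two_mul]
    exact mul_inv_cancel₀ h2
  have hlam0 : lam ≠ 0 := inv_ne_zero h2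
  have hB0 : B (0 : ZMod p) = 0 := MulChar.map_zero B
  have hAv : ∀ v : ZMod p, A v = B (v * v) := by
    intro v
    rw [← hB, MulChar.pow_apply' B two_ne_zero, sq, map_mul]
  have h8 : A⁻¹ 8 = A (lam ^ 3) := by
    have h8' : (8 : ZMod p) = 2 ^ 3 := by norm_num
    have h8ne : (8 : ZMod p) ≠ 0 := by
      rw [h8']; exact pow_ne_zero _ h2
    rw [MulChar.inv_apply, Ring.inverse_eq_inv, h8', hlam_def, ← inv_pow]
  -- Step 1 : shift x = u + lam
  have step1 : ∑ x : ZMod p, A (x * (x - 1) * (x - lam))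
      = ∑ u : ZMod p, A (u * (u * u - lam * lam)) := by
    rw [← Equiv.sum_comp (Equiv.addRight lam)
      (fun x => A (x * (x - 1) * (x - lam)))]
    refine Finset.sum_congr rfl fun u _ => ?_
    have he : (Equiv.addRight lam) u = u + lam := rfl
    rw [he]
    congr 1
    linear_combination (u * u + u * lam) * hlam
  -- Step 2 : scale u = lam * v
  have step2 : ∑ u : ZMod p, A (u * (u * u - lam * lam))
      = A (lam ^ 3) * ∑ v : ZMod p, A (v * (v * v - 1)) := by
    rw [← Equiv.sum_comp (Equiv.mulLeft₀ lam hlam0)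
      (fun u => A (u * (u * u - lam * lam))), Finset.mul_sum]
    refine Finset.sum_congr rfl fun v _ => ?_
    have he : (Equiv.mulLeft₀ lam hlam0) v = lam * v := rfl
    rw [he]
    have harg : (lam * v) * ((lam * v) * (lam * v) - lam * lam)
        = lam ^ 3 * (v * (v * v - 1)) := by ring
    rw [harg, map_mul]
  -- Step 3 : split the character using B² = A
  have step3 : ∑ v : ZMod p, A (v * (v * v - 1))
      = ∑ v : ZMod p, B (v * v) * A (v * v - 1) := by
    refine Finset.sum_congr rfl fun v _ => ?_
    rw [map_mul, hAv]
  -- Step 4 : fiber over w = v²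
  have step4 : ∑ v : ZMod p, B (v * v) * A (v * v - 1)
      = ∑ w : ZMod p,
          ((Finset.univ.filter (fun v : ZMod p => v * v = w)).card : ℂ)
            * (B w * A (w - 1)) := by
    rw [← Finset.sum_fiberwise' Finset.univ (fun v : ZMod p => v * v)
      (fun w => B w * A (w - 1))]
    refine Finset.sum_congr rfl fun w _ => ?_
    rw [Finset.sum_const, nsmul_eq_mul]
  -- Step 5 : count the fibers with φ
  have step5 : ∀ w : ZMod p,
      ((Finset.univ.filter (fun v : ZMod p => v * v = w)).card : ℂ)
        = (if w = 0 then 1 else 0) + ((1 : MulChar (ZMod p) ℂ) w + φ w) := by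
    intro w
    have hfilt : (Finset.univ.filter (fun v : ZMod p => v * v = w))
        = (Finset.univ.filter (fun v : ZMod p => v ^ orderOf φ = w)) := by
      refine Finset.filter_congr fun v _ => ?_
      rw [hφ, sq]
    rw [hfilt, count_pow_eq hg φ w, hφ, Finset.sum_range_succ, Finset.sum_range_one,
      pow_zero, pow_one]
  -- Step 6 : expand
  have step6 : ∑ w : ZMod p,
      ((Finset.univ.filter (fun v : ZMod p => v * v = w)).card : ℂ)
        * (B w * A (w - 1))
      = (∑ w : ZMod p, B w * A (w - 1)) + ∑ w : ZMod p, φ w * (B w * A (w - 1)) := by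
    rw [Finset.sum_congr rfl fun w _ => by rw [step5 w, add_mul, add_mul]]
    rw [Finset.sum_add_distrib, Finset.sum_add_distrib]
    have hz : ∑ w : ZMod p, (if w = 0 then (1 : ℂ) else 0) * (B w * A (w - 1)) = 0 := by
      simp only [ite_mul, one_mul, zero_mul]
      rw [Finset.sum_ite_eq' Finset.univ (0 : ZMod p) (fun w => B w * A (w - 1))]
      simp [hB0]
    have h1 : ∑ w : ZMod p, (1 : MulChar (ZMod p) ℂ) w * (B w * A (w - 1))
        = ∑ w : ZMod p, B w * A (w - 1) := by
      refine Finset.sum_congr rfl fun w _ => ?_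
      rcases eq_or_ne w 0 with rfl | hw
      · simp [hB0]
      · rw [MulChar.one_apply hw.isUnit, one_mul]
    rw [hz, h1, zero_add]
  -- Step 7 : flip w - 1 = (-1) * (1 - w)
  have hflip : ∀ w : ZMod p, A (w - 1) = A (-1) * A (1 - w) := by
    intro w
    rw [← map_mul]
    congr 1
    ring
  calc ∑ x : ZMod p, A (x * (x - 1) * (x - lam))
      = A (lam ^ 3) * ((∑ w : ZMod p, B w * A (w - 1))
          + ∑ w : ZMod p, φ w * (B w * A (w - 1))) := by
        rw [step1, step2, step3, step4, step6]
    _ = A⁻¹ 8 * A (-1) *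
        ((∑ t : ZMod p, B t * A (1 - t)) + ∑ t : ZMod p, (φ * B) t * A (1 - t)) := by
        rw [h8]
        have e1 : ∑ w : ZMod p, B w * A (w - 1)
            = A (-1) * ∑ t : ZMod p, B t * A (1 - t) := by
          rw [Finset.mul_sum]
          exact Finset.sum_congr rfl fun w _ => by rw [hflip w]; ring
        have e2 : ∑ w : ZMod p, φ w * (B w * A (w - 1))
            = A (-1) * ∑ t : ZMod p, (φ * B) t * A (1 - t) := by
          rw [Finset.mul_sum]
          refine Finset.sum_congr rfl fun w _ => ?_
          rw [hflip w, MulChar.mul_apply]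
          ring
        rw [e1, e2]
        ring

end Aux


/-- fourth case of Corollary 3.8: For odd `l ≥ 5`, an odd prime
`p ≡ 1 (mod l)` with `(p−1)/l` even, `χ` of order `l`, `ψ` of order `2l` with
`ψ² = χ`, and `φ` the quadratic character,
`N_l(1/2) = p + 2 ∑_{i=1}^{(l−1)/2} Re(ψ^{−2i}(8) ψ^{2i}(−1)
  (J(ψ^i, ψ^{2i}) + J(φψ^i, ψ^{2i})))`. -/
theorem point_count_half_even_l_odd (p : ℕ) [Fact p.Prime] (hp2 : p ≠ 2)
    (l : ℕ) (hl : 5 ≤ l) (hlodd : Odd l) (hpl : p % l = 1)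
    (heven : Even ((p - 1) / l))
    (χ ψ φ : MulChar (ZMod p) ℂ) (hχ : orderOf χ = l)
    (hψord : orderOf ψ = 2 * l) (hψsq : ψ ^ 2 = χ) (hφ : orderOf φ = 2) :
    ((Finset.univ.filter
        (fun v : ZMod p × ZMod p =>
          v.2 ^ l = v.1 * (v.1 - 1) * (v.1 - (2 : ZMod p)⁻¹))).card : ℂ) =
      p + 2 * ∑ i ∈ Finset.Icc 1 ((l - 1) / 2),
          ((((ψ ^ (2 * i))⁻¹ 8 * (ψ ^ (2 * i)) (-1) *
              ((∑ t : ZMod p, (ψ ^ i) t * (ψ ^ (2 * i)) (1 - t)) +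
                ∑ t : ZMod p, (φ * ψ ^ i) t * (ψ ^ (2 * i)) (1 - t))).re : ℝ) : ℂ) := by
  classical
  have hp : p.Prime := Fact.out
  obtain ⟨g, hg⟩ := IsCyclic.exists_generator (α := (ZMod p)ˣ)
  have hl0 : l ≠ 0 := by omega
  set lam : ZMod p := (2 : ZMod p)⁻¹ with hlam_def
  have h2 : (2 : ZMod p) ≠ 0 := by
    intro h
    have h' : ((2 : ℕ) : ZMod p) = 0 := by exact_mod_cast h
    rw [ZMod.natCast_eq_zero_iff] at h'
    exact hp2 ((Nat.prime_dvd_prime_iff_eq hp Nat.prime_two).mp h')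
  have hlam0 : lam ≠ 0 := inv_ne_zero h2
  have h2' : lam * 2 = 1 := inv_mul_cancel₀ h2
  have hlam1 : lam ≠ 1 := by
    intro h
    rw [h, one_mul] at h2'
    have h10 : (1 : ZMod p) = 0 := by linear_combination h2'
    exact one_ne_zero h10
  -- T j
  set T : ℕ → ℂ := fun j => ∑ x : ZMod p, (χ ^ j) (x * (x - 1) * (x - lam)) with hT
  -- Step 1 : reduce to sum over x of fiber counts
  have hcard : ((Finset.univ.filter
      (fun v : ZMod p × ZMod p => v.2 ^ l = v.1 * (v.1 - 1) * (v.1 - lam))).card : ℂ)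
      = ∑ x : ZMod p, ((Finset.univ.filter
          (fun y : ZMod p => y ^ l = x * (x - 1) * (x - lam))).card : ℂ) := by
    rw [Finset.card_filter, ← Finset.univ_product_univ, Finset.sum_product]
    push_cast
    refine Finset.sum_congr rfl fun x _ => ?_
    rw [Finset.sum_boole]
  -- Step 2 : counts via characters
  have hcount : ∀ x : ZMod p, ((Finset.univ.filter
      (fun y : ZMod p => y ^ l = x * (x - 1) * (x - lam))).card : ℂ)
      = (if x * (x - 1) * (x - lam) = 0 then 1 else 0)
        + ∑ j ∈ Finset.range l, (χ ^ j) (x * (x - 1) * (x - lam)) := by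
    intro x
    have h := count_pow_eq hg χ (x * (x - 1) * (x - lam))
    rwa [hχ] at h
  -- Step 3 : roots count
  have hroots : (∑ x : ZMod p,
      if x * (x - 1) * (x - lam) = 0 then (1 : ℂ) else 0) = 3 := by
    rw [Finset.sum_boole]
    have hfilt : Finset.univ.filter (fun x : ZMod p => x * (x - 1) * (x - lam) = 0)
        = {0, 1, lam} := by
      ext x
      simp only [Finset.mem_filter, Finset.mem_univ, true_and, Finset.mem_insert,
        Finset.mem_singleton, mul_eq_zero, sub_eq_zero]
      tauto
    rw [hfilt]
    have c1 : (0 : ZMod p) ∉ ({1, lam} : Finset (ZMod p)) := by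
      simp only [Finset.mem_insert, Finset.mem_singleton]
      push_neg
      exact ⟨zero_ne_one, fun h => hlam0 h.symm⟩
    have c2 : (1 : ZMod p) ∉ ({lam} : Finset (ZMod p)) := by
      simp only [Finset.mem_singleton]
      exact fun h => hlam1 h.symm
    rw [Finset.card_insert_of_notMem c1, Finset.card_insert_of_notMem c2,
      Finset.card_singleton]
    norm_num
  -- Step 4 : trivial character term
  have hT0 : T 0 = (p : ℂ) - 3 := by
    have hone : ∀ x : ZMod p, (χ ^ 0) (x * (x - 1) * (x - lam))
        = 1 - (if x * (x - 1) * (x - lam) = 0 then (1 : ℂ) else 0) := by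
      intro x
      rcases eq_or_ne (x * (x - 1) * (x - lam)) 0 with h | h
      · rw [pow_zero, h, MulChar.map_zero, if_pos rfl]; norm_num
      · rw [pow_zero, MulChar.one_apply h.isUnit, if_neg h]; norm_num
    show (∑ x : ZMod p, (χ ^ 0) (x * (x - 1) * (x - lam))) = (p : ℂ) - 3
    rw [Finset.sum_congr rfl fun x _ => hone x, Finset.sum_sub_distrib, hroots,
      Finset.sum_const, Finset.card_univ, ZMod.card, nsmul_eq_mul, mul_one]
  -- Step 5 : split off j = 0 and pair up
  obtain ⟨k, hk⟩ := hlodd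
  have hk2 : (l - 1) / 2 = k := by omega
  have hrange : Finset.range l = insert 0 (Finset.Ioc 0 (2 * k)) := by
    ext j
    simp only [Finset.mem_range, Finset.mem_insert, Finset.mem_Ioc]
    omega
  have hsplit0 : ∑ j ∈ Finset.range l, T j = T 0 + ∑ j ∈ Finset.Ioc 0 (2 * k), T j := by
    rw [hrange, Finset.sum_insert (by simp)]
  have hsplit : ∑ j ∈ Finset.Ioc 0 (2 * k), T j
      = ∑ i ∈ Finset.Ioc 0 k, T i + ∑ j ∈ Finset.Ioc k (2 * k), T j := by
    rw [Finset.sum_Ioc_consecutive T (Nat.zero_le k) (by omega)]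
  have hrefl : ∑ j ∈ Finset.Ioc k (2 * k), T j = ∑ i ∈ Finset.Ioc 0 k, T (l - i) := by
    refine Finset.sum_nbij' (fun j => l - j) (fun i => l - i) ?_ ?_ ?_ ?_ ?_
    · intro a ha; simp only [Finset.mem_Ioc] at ha ⊢; omega
    · intro a ha; simp only [Finset.mem_Ioc] at ha ⊢; omega
    · intro a ha; simp only [Finset.mem_Ioc] at ha
      show l - (l - a) = a; omega
    · intro a ha; simp only [Finset.mem_Ioc] at ha
      show l - (l - a) = a; omega
    · intro a ha
      simp only [Finset.mem_Ioc] at ha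
      show T a = T (l - (l - a))
      congr 1
      omega
  -- Step 6 : conjugation
  have hconj : ∀ i ∈ Finset.Ioc 0 k, T (l - i) = (starRingEnd ℂ) (T i) := by
    intro i hi
    simp only [Finset.mem_Ioc] at hi
    have hinv : χ ^ (l - i) = (χ ^ i)⁻¹ := by
      apply eq_inv_of_mul_eq_one_left
      rw [← pow_add]
      have hli : l - i + i = l := by omega
      rw [hli, ← hχ, pow_orderOf_eq_one]
    show (∑ x : ZMod p, (χ ^ (l - i)) (x * (x - 1) * (x - lam)))
      = (starRingEnd ℂ) (∑ x : ZMod p, (χ ^ i) (x * (x - 1) * (x - lam)))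
    rw [hinv, map_sum]
    refine Finset.sum_congr rfl fun x _ => ?_
    rw [← MulChar.star_apply' (χ ^ i)]
    rfl
  -- Step 7 : value of T i
  have hTi : ∀ i : ℕ, T i
      = (ψ ^ (2 * i))⁻¹ 8 * (ψ ^ (2 * i)) (-1) *
          ((∑ t : ZMod p, (ψ ^ i) t * (ψ ^ (2 * i)) (1 - t)) +
            ∑ t : ZMod p, (φ * ψ ^ i) t * (ψ ^ (2 * i)) (1 - t)) := by
    intro i
    have hchar : χ ^ i = ψ ^ (2 * i) := by rw [← hψsq, ← pow_mul]
    have hB2 : (ψ ^ i) ^ 2 = ψ ^ (2 * i) := by rw [← pow_mul, mul_comm]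
    have h := key_sum hp2 hg (ψ ^ (2 * i)) (ψ ^ i) φ hφ hB2
    show (∑ x : ZMod p, (χ ^ i) (x * (x - 1) * (x - lam))) = _
    rw [hchar]
    exact h
  have hsummand : ∀ i ∈ Finset.Ioc 0 k, T i + T (l - i)
      = 2 * ((((ψ ^ (2 * i))⁻¹ 8 * (ψ ^ (2 * i)) (-1) *
          ((∑ t : ZMod p, (ψ ^ i) t * (ψ ^ (2 * i)) (1 - t)) +
            ∑ t : ZMod p, (φ * ψ ^ i) t * (ψ ^ (2 * i)) (1 - t))).re : ℝ) : ℂ) := by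
    intro i hi
    rw [hconj i hi, Complex.add_conj, hTi i]
    push_cast
    ring
  have hIcc : Finset.Icc 1 k = Finset.Ioc 0 k := Finset.Icc_add_one_left_eq_Ioc 0 k
  calc ((Finset.univ.filter
      (fun v : ZMod p × ZMod p => v.2 ^ l = v.1 * (v.1 - 1) * (v.1 - lam))).card : ℂ)
      = ∑ x : ZMod p, ((Finset.univ.filter
          (fun y : ZMod p => y ^ l = x * (x - 1) * (x - lam))).card : ℂ) := hcard
    _ = ∑ x : ZMod p, ((if x * (x - 1) * (x - lam) = 0 then 1 else 0)
          + ∑ j ∈ Finset.range l, (χ ^ j) (x * (x - 1) * (x - lam))) :=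
        Finset.sum_congr rfl fun x _ => hcount x
    _ = (∑ x : ZMod p, if x * (x - 1) * (x - lam) = 0 then (1 : ℂ) else 0)
          + ∑ j ∈ Finset.range l, T j := by
        rw [Finset.sum_add_distrib]
        congr 1
        exact Finset.sum_comm
    _ = 3 + (T 0 + (∑ i ∈ Finset.Ioc 0 k, T i + ∑ j ∈ Finset.Ioc k (2 * k), T j)) := by
        rw [hroots, hsplit0, hsplit]
    _ = 3 + (((p : ℂ) - 3) + ∑ i ∈ Finset.Ioc 0 k, (T i + T (l - i))) := by
        rw [hT0, hrefl, ← Finset.sum_add_distrib]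
    _ = 3 + (((p : ℂ) - 3) + ∑ i ∈ Finset.Ioc 0 k,
          2 * ((((ψ ^ (2 * i))⁻¹ 8 * (ψ ^ (2 * i)) (-1) *
          ((∑ t : ZMod p, (ψ ^ i) t * (ψ ^ (2 * i)) (1 - t)) +
            ∑ t : ZMod p, (φ * ψ ^ i) t * (ψ ^ (2 * i)) (1 - t))).re : ℝ) : ℂ)) := by
        rw [Finset.sum_congr rfl hsummand]
    _ = p + 2 * ∑ i ∈ Finset.Icc 1 ((l - 1) / 2),
          ((((ψ ^ (2 * i))⁻¹ 8 * (ψ ^ (2 * i)) (-1) *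
              ((∑ t : ZMod p, (ψ ^ i) t * (ψ ^ (2 * i)) (1 - t)) +
                ∑ t : ZMod p, (φ * ψ ^ i) t * (ψ ^ (2 * i)) (1 - t))).re : ℝ) : ℂ) := by
        rw [hk2, hIcc, Finset.mul_sum]
        ring
end

section
/- Let p be a prime with p ≡ 1 (mod 3), let χ be a multiplicative character of F_p of order 3 with values in ℂ, and let φ be the quadratic character of F_p. Then N_3(1/2) = p + 2·Re( J(χ, χ²) + J(φχ, χ²) ), where 1/2 denotes the inverse of 2 in F_p. (This is the l = 3 case of the paper's Corollary 3.8, stated there as −a_p(C_{3,1/2}) = 2 + 2p·Re[ (χ choose χ) + (φχ choose χ) ]; it is translated using (χ choose χ) = χ(−1)/p · J(χ, χ²), (φχ choose χ) = χ(−1)/p · J(φχ, χ²), χ(−1) = 1, and a_p = p − N_3(1/2) − 2.) -/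
open Finset Polynomial

section aux

variable {p : ℕ} [Fact p.Prime]

lemma mulChar_val_pow_eq_one {n : ℕ} (hn : n ≠ 0) (χ : MulChar (ZMod p) ℂ)
    (hχ : χ ^ n = 1) {a : ZMod p} (ha : a ≠ 0) : (χ a) ^ n = 1 := by
  rw [← χ.pow_apply' hn a, hχ, MulChar.one_apply (isUnit_iff_ne_zero.mpr ha)]

/-- Key counting lemma: the number of `n`-th roots of `a` in `ZMod p`, where `χ` has
order exactly `n`, equals the character sum `∑_{j<n} (χ a)^j`. -/
lemma count_pow_card {n : ℕ} (hn : 0 < n) (χ : MulChar (ZMod p) ℂ) (hχ : orderOf χ = n)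
    (a : ZMod p) :
    ((Finset.univ.filter (fun y : ZMod p => y ^ n = a)).card : ℂ) =
      ∑ j ∈ Finset.range n, (χ a) ^ j := by
  rcases eq_or_ne a 0 with rfl | ha
  · have h1 : (Finset.univ.filter (fun y : ZMod p => y ^ n = 0)) = {0} := by
      ext y; simp [pow_eq_zero_iff hn.ne']
    have h2 : χ (0 : ZMod p) = 0 := χ.map_nonunit (by simp)
    rw [h1, h2, Finset.card_singleton, geom_sum_eq (by norm_num : (0:ℂ) ≠ 1) n,
      zero_pow hn.ne']
    norm_num
  · obtain ⟨g, hg⟩ := IsCyclic.exists_generator (α := (ZMod p)ˣ)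
    have hog : orderOf g = p - 1 := by
      rw [orderOf_eq_card_of_forall_mem_zpowers hg, Nat.card_eq_fintype_card, ZMod.card_units]
    have hdvd : n ∣ p - 1 := by
      have := χ.orderOf_dvd_card_sub_one
      rwa [hχ, ZMod.card] at this
    have hp1 : p - 1 ≠ 0 := by
      have := (Fact.out : p.Prime).two_le; omega
    set ω : ℂ := χ ↑g with hω_def
    have hiff : ∀ m : ℕ, ω ^ m = 1 ↔ χ ^ m = 1 := by
      intro m
      rcases Nat.eq_zero_or_pos m with rfl | hm
      · simp
      constructor
      · intro h
        apply MulChar.ext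
        intro x
        obtain ⟨k, hk⟩ : x ∈ Submonoid.powers g := by
          rw [mem_powers_iff_mem_zpowers]; exact hg x
        rw [MulChar.one_apply_coe, ← hk, χ.pow_apply' hm.ne', Units.val_pow_eq_pow_val,
          map_pow, ← pow_mul, mul_comm k m, pow_mul, h, one_pow]
      · intro h
        rw [hω_def, ← χ.pow_apply' hm.ne', h, MulChar.one_apply_coe]
    have hordω : orderOf ω = n := by
      rw [← hχ]; exact orderOf_eq_orderOf_iff.mpr hiff
    have hωn : ω ^ n = 1 := hordω ▸ pow_orderOf_eq_one ω
    obtain ⟨k, hk⟩ : Units.mk0 a ha ∈ Submonoid.powers g := by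
      rw [mem_powers_iff_mem_zpowers]; exact hg _
    have hk' : g ^ k = Units.mk0 a ha := hk
    have hka : a = (↑g : ZMod p) ^ k := by
      rw [← Units.val_pow_eq_pow_val, hk', Units.val_mk0]
    have hχa : χ a = ω ^ k := by rw [hka, map_pow]
    have hsolv : (∃ α : ZMod p, α ^ n = a) ↔ n ∣ k := by
      constructor
      · rintro ⟨α, hα⟩
        have hα0 : α ≠ 0 := by
          rintro rfl; rw [zero_pow hn.ne'] at hα; exact ha hα.symm
        obtain ⟨j, hj⟩ : Units.mk0 α hα0 ∈ Submonoid.powers g := by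
          rw [mem_powers_iff_mem_zpowers]; exact hg _
        have hj' : g ^ j = Units.mk0 α hα0 := hj
        have hgj : g ^ (j * n) = g ^ k := by
          rw [pow_mul, hj', hk']
          ext
          push_cast
          exact hα
        have hmod : j * n ≡ k [MOD p - 1] := by
          rwa [pow_eq_pow_iff_modEq, hog] at hgj
        have hmod' : j * n ≡ k [MOD n] := hmod.of_dvd hdvd
        have hk0 : k ≡ 0 [MOD n] :=
          hmod'.symm.trans (Nat.modEq_zero_iff_dvd.mpr ⟨j, mul_comm j n⟩)
        exact Nat.modEq_zero_iff_dvd.mp hk0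
      · rintro ⟨m, rfl⟩
        exact ⟨(↑g : ZMod p) ^ m, by rw [hka, ← pow_mul, mul_comm m n]⟩
    have hchi_iff : χ a = 1 ↔ n ∣ k := by
      rw [hχa, ← hordω]; exact orderOf_dvd_iff_pow_eq_one.symm
    have hχan : (χ a) ^ n = 1 := by
      rw [hχa, ← pow_mul, mul_comm k n, pow_mul, hωn, one_pow]
    have hprim : IsPrimitiveRoot ((↑(g ^ ((p-1)/n)) : ZMod p)) n := by
      rw [IsPrimitiveRoot.coe_units_iff]
      have hord : orderOf (g ^ ((p-1)/n)) = n := by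
        rw [orderOf_pow, hog, Nat.gcd_comm, Nat.gcd_eq_left (Nat.div_dvd_of_dvd hdvd),
          Nat.div_div_self hdvd hp1]
      have := IsPrimitiveRoot.orderOf (g ^ ((p-1)/n))
      rwa [hord] at this
    have hfc : (Finset.univ.filter (fun y : ZMod p => y ^ n = a)).card
        = Multiset.card (Polynomial.nthRoots n a) := by
      have hnd := hprim.nthRoots_nodup ha
      rw [← Multiset.toFinset_card_eq_card_iff_nodup.mpr hnd]
      congr 1
      ext y
      simp [Polynomial.mem_nthRoots hn]
    rw [hfc, hprim.card_nthRoots]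
    by_cases hnk : n ∣ k
    · rw [if_pos (hsolv.mpr hnk)]
      simp [hchi_iff.mpr hnk]
    · rw [if_neg (fun h => hnk (hsolv.mp h))]
      have h1 : χ a ≠ 1 := fun h => hnk (hchi_iff.mp h)
      rw [geom_sum_eq h1, hχan, sub_self, zero_div]
      norm_num

lemma chi_neg_one (χ : MulChar (ZMod p) ℂ) (hχ : orderOf χ = 3) : χ (-1) = 1 := by
  have h3 : χ ^ 3 = 1 := hχ ▸ pow_orderOf_eq_one χ
  have hne : (-1 : ZMod p) ≠ 0 := by
    intro h; rw [neg_eq_zero] at h; exact one_ne_zero h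
  have hc : (χ (-1)) ^ 3 = 1 := mulChar_val_pow_eq_one (by norm_num) χ h3 hne
  have hs : (χ (-1)) ^ 2 = 1 := by
    rw [← map_pow]; norm_num
  have h : χ (-1) * (χ (-1))^2 = 1 := by
    rw [show χ (-1) * (χ (-1))^2 = (χ (-1))^3 by ring, hc]
  rwa [hs, mul_one] at h

lemma conj_chi (χ : MulChar (ZMod p) ℂ) (hχ : orderOf χ = 3) (a : ZMod p) :
    (starRingEnd ℂ) (χ a) = (χ a) ^ 2 := by
  rcases eq_or_ne a 0 with rfl | ha
  · rw [χ.map_nonunit (by simp)]; simp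
  · have h3 : (χ a) ^ 3 = 1 :=
      mulChar_val_pow_eq_one (by norm_num) χ (hχ ▸ pow_orderOf_eq_one χ) ha
    have hns : Complex.normSq (χ a) = 1 := by
      have h := congrArg Complex.normSq h3
      rw [map_pow, map_one] at h
      have h0 : 0 ≤ Complex.normSq (χ a) := Complex.normSq_nonneg _
      nlinarith [h, h0, sq_nonneg (Complex.normSq (χ a) - 1), sq_nonneg (Complex.normSq (χ a) + 1)]
    have hmc : χ a * (starRingEnd ℂ) (χ a) = 1 := by
      rw [Complex.mul_conj, hns]; norm_num
    calc (starRingEnd ℂ) (χ a) = (starRingEnd ℂ) (χ a) * ((χ a)^3) := by rw [h3, mul_one]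
      _ = (χ a * (starRingEnd ℂ) (χ a)) * (χ a)^2 := by ring
      _ = (χ a)^2 := by rw [hmc, one_mul]

lemma chi_inv_apply (χ : MulChar (ZMod p) ℂ) (hχ : orderOf χ = 3) {x : ZMod p} (hx : x ≠ 0) :
    χ x⁻¹ = (χ x) ^ 2 := by
  have h1 : χ x⁻¹ * χ x = 1 := by rw [← map_mul, inv_mul_cancel₀ hx, map_one]
  have h2 : (χ x) ^ 3 = 1 :=
    mulChar_val_pow_eq_one (by norm_num) χ (hχ ▸ pow_orderOf_eq_one χ) hx
  have h4 : χ x * (χ x)^2 = 1 := by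
    rw [show χ x * (χ x)^2 = (χ x)^3 by ring, h2]
  calc χ x⁻¹ = χ x⁻¹ * (χ x * (χ x)^2) := by rw [h4, mul_one]
    _ = (χ x⁻¹ * χ x) * (χ x)^2 := by ring
    _ = (χ x)^2 := by rw [h1, one_mul]

lemma phi_inv_apply (φ : MulChar (ZMod p) ℂ) (hφ : orderOf φ = 2) {x : ZMod p} (hx : x ≠ 0) :
    φ x⁻¹ = φ x := by
  have h1 : φ x⁻¹ * φ x = 1 := by rw [← map_mul, inv_mul_cancel₀ hx, map_one]
  have h2 : (φ x) ^ 2 = 1 :=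
    mulChar_val_pow_eq_one (by norm_num) φ (hφ ▸ pow_orderOf_eq_one φ) hx
  have h4 : φ x * φ x = 1 := by
    rw [show φ x * φ x = (φ x)^2 by ring, h2]
  calc φ x⁻¹ = φ x⁻¹ * (φ x * φ x) := by rw [h4, mul_one]
    _ = (φ x⁻¹ * φ x) * φ x := by ring
    _ = φ x := by rw [h1, one_mul]

end aux

/-- case `l = 3` of Corollary 3.8: For a prime `p ≡ 1 (mod 3)`,
`χ` of order `3`, and `φ` the quadratic character,
`N_3(1/2) = p + 2 Re(J(χ, χ²) + J(φχ, χ²))`. -/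
theorem point_count_half_cubic_re (p : ℕ) [Fact p.Prime] (hp3 : p % 3 = 1)
    (χ φ : MulChar (ZMod p) ℂ) (hχ : orderOf χ = 3) (hφ : orderOf φ = 2) :
    ((Finset.univ.filter
        (fun v : ZMod p × ZMod p =>
          v.2 ^ 3 = v.1 * (v.1 - 1) * (v.1 - (2 : ZMod p)⁻¹))).card : ℂ) =
      p + 2 * (((((∑ t : ZMod p, χ t * (χ ^ 2) (1 - t)) +
          ∑ t : ZMod p, (φ * χ) t * (χ ^ 2) (1 - t)).re : ℝ)) : ℂ) := by
  have hp := (Fact.out : p.Prime)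
  have hp2 : p ≠ 2 := by rintro rfl; norm_num at hp3
  have h2 : (2 : ZMod p) ≠ 0 := by
    intro h
    have h' : ((2:ℕ) : ZMod p) = 0 := by exact_mod_cast h
    rw [ZMod.natCast_eq_zero_iff] at h'
    exact hp2 ((Nat.prime_dvd_prime_iff_eq hp Nat.prime_two).mp h')
  have hinv2 : (2 : ZMod p)⁻¹ ≠ 0 := inv_ne_zero h2
  have hχ3 : χ ^ 3 = 1 := hχ ▸ pow_orderOf_eq_one χ
  have hφ2 : φ ^ 2 = 1 := hφ ▸ pow_orderOf_eq_one φ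
  have hcube : ∀ {x : ZMod p}, x ≠ 0 → (χ x) ^ 3 = 1 :=
    fun hx => mulChar_val_pow_eq_one (by norm_num) χ hχ3 hx
  have hsq : ∀ {x : ZMod p}, x ≠ 0 → (φ x) ^ 2 = 1 :=
    fun hx => mulChar_val_pow_eq_one (by norm_num) φ hφ2 hx
  have hχ0 : χ (0 : ZMod p) = 0 := χ.map_nonunit (by simp)
  have hφ0 : φ (0 : ZMod p) = 0 := φ.map_nonunit (by simp)
  have hχm1 : χ (-1) = 1 := chi_neg_one χ hχ
  have hm1 : (-1 : ZMod p) ≠ 0 := by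
    intro h; rw [neg_eq_zero] at h; exact one_ne_zero h
  -- Step 1 : split the point count over x
  have hsplit : (Finset.univ.filter
      (fun v : ZMod p × ZMod p =>
        v.2 ^ 3 = v.1 * (v.1 - 1) * (v.1 - (2 : ZMod p)⁻¹))).card
      = ∑ x : ZMod p, (Finset.univ.filter
          (fun y : ZMod p => y ^ 3 = x * (x - 1) * (x - (2 : ZMod p)⁻¹))).card := by
    rw [Finset.card_filter, Fintype.sum_prod_type]
    exact Finset.sum_congr rfl fun x _ => (Finset.card_filter _ _).symm
  -- Step 2 : the count as a character sum
  have hLHS : ((Finset.univ.filter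
      (fun v : ZMod p × ZMod p =>
        v.2 ^ 3 = v.1 * (v.1 - 1) * (v.1 - (2 : ZMod p)⁻¹))).card : ℂ)
      = (p : ℂ) + (∑ x : ZMod p, χ (x * (x - 1) * (x - (2 : ZMod p)⁻¹)))
        + ∑ x : ZMod p, (χ (x * (x - 1) * (x - (2 : ZMod p)⁻¹)))^2 := by
    have h1 : ((Finset.univ.filter
        (fun v : ZMod p × ZMod p =>
          v.2 ^ 3 = v.1 * (v.1 - 1) * (v.1 - (2 : ZMod p)⁻¹))).card : ℂ)
        = ∑ x : ZMod p, ((Finset.univ.filter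
            (fun y : ZMod p => y ^ 3 = x * (x - 1) * (x - (2 : ZMod p)⁻¹))).card : ℂ) := by
      exact_mod_cast hsplit
    rw [h1]
    have h2' : ∀ x : ZMod p, ((Finset.univ.filter
        (fun y : ZMod p => y ^ 3 = x * (x - 1) * (x - (2 : ZMod p)⁻¹))).card : ℂ)
        = 1 + χ (x * (x - 1) * (x - (2 : ZMod p)⁻¹))
          + (χ (x * (x - 1) * (x - (2 : ZMod p)⁻¹)))^2 := by
      intro x
      rw [count_pow_card (by norm_num) χ hχ]
      rw [Finset.sum_range_succ, Finset.sum_range_succ, Finset.sum_range_one]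
      ring
    rw [Finset.sum_congr rfl (fun x _ => h2' x), Finset.sum_add_distrib,
      Finset.sum_add_distrib, Finset.sum_const, Finset.card_univ, ZMod.card,
      nsmul_eq_mul, mul_one]
  -- Notation for the two Jacobi sums
  set J1 : ℂ := ∑ t : ZMod p, χ t * (χ ^ 2) (1 - t) with hJ1def
  set J2 : ℂ := ∑ t : ZMod p, (φ * χ) t * (χ ^ 2) (1 - t) with hJ2def
  -- J1 = -1
  have hχne1 : χ ≠ 1 := by
    intro h; rw [h, orderOf_one] at hχ; norm_num at hχ
  have hJ1val : J1 = -1 := by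
    have hinv : χ ^ 2 = χ⁻¹ := by
      apply eq_inv_of_mul_eq_one_left
      rw [← pow_succ]; exact hχ3
    have : J1 = jacobiSum χ (χ ^ 2) := rfl
    rw [this, hinv, jacobiSum_nontrivial_inv hχne1, hχm1]
  -- The second Jacobi sum
  -- Step (a) : substitution x = (1+u)/2
  have hstepa : (∑ x : ZMod p, (χ (x * (x - 1) * (x - (2 : ZMod p)⁻¹)))^2)
      = ∑ u : ZMod p, (χ (u^3 - u))^2 := by
    refine Finset.sum_nbij' (i := fun x => 2*x - 1)
      (j := fun u => (1 + u) * (2 : ZMod p)⁻¹)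
      (fun a _ => Finset.mem_univ _) (fun a _ => Finset.mem_univ _)
      (fun x _ => by field_simp [h2]; ring) (fun u _ => by field_simp [h2]; ring)
      (fun x _ => ?_)
    have hfx : x * (x - 1) * (x - (2 : ZMod p)⁻¹)
        = ((2*x-1)^3 - (2*x-1)) * ((2 : ZMod p)⁻¹)^3 := by
      field_simp [h2]; ring
    rw [hfx, map_mul, map_pow, chi_inv_apply χ hχ h2]
    rw [show ((χ (2:ZMod p))^2)^3 = ((χ (2:ZMod p))^3)^2 by ring, hcube h2]
    rw [one_pow, mul_one]
  -- Step (b) : substitution u ↦ u⁻¹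
  have hstepb : (∑ u : ZMod p, (χ (u^3 - u))^2)
      = (∑ u : ZMod p, (χ (1 - u^2))^2) - 1 := by
    have h0l : ∑ u : ZMod p, (χ (u^3 - u))^2
        = ∑ u ∈ Finset.univ \ {(0:ZMod p)}, (χ (u^3 - u))^2 := by
      rw [Finset.sum_eq_sum_sdiff_singleton_add (Finset.mem_univ (0:ZMod p))]
      simp [hχ0]
    have h0r : ∑ u : ZMod p, (χ (1 - u^2))^2
        = (∑ u ∈ Finset.univ \ {(0:ZMod p)}, (χ (1 - u^2))^2) + 1 := by
      rw [Finset.sum_eq_sum_sdiff_singleton_add (Finset.mem_univ (0:ZMod p))]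
      simp
    rw [h0l, h0r, add_sub_cancel_right]
    refine Finset.sum_nbij' (i := fun u => u⁻¹) (j := fun u => u⁻¹)
      ?_ ?_ ?_ ?_ ?_
    · intro a ha; simp only [Finset.mem_sdiff, Finset.mem_univ, Finset.mem_singleton,
        true_and] at ha ⊢; exact inv_ne_zero ha
    · intro a ha; simp only [Finset.mem_sdiff, Finset.mem_univ, Finset.mem_singleton,
        true_and] at ha ⊢; exact inv_ne_zero ha
    · intro a _; exact inv_inv a
    · intro a _; exact inv_inv a
    · intro u hu
      simp only [Finset.mem_sdiff, Finset.mem_univ, Finset.mem_singleton, true_and] at hu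
      have key : u^3 - u = (1 - (u⁻¹)^2) * u^3 := by field_simp
      rw [key, map_mul, map_pow, hcube hu, mul_one]
  -- Step (c) : counting squares
  have hstepc : (∑ u : ZMod p, (χ (1 - u^2))^2)
      = ∑ t : ZMod p, (1 + φ t) * (χ (1 - t))^2 := by
    rw [← Finset.sum_fiberwise' Finset.univ (fun u : ZMod p => u^2)
      (fun t => (χ (1 - t))^2)]
    refine Finset.sum_congr rfl fun t _ => ?_
    rw [Finset.sum_const, nsmul_eq_mul]
    congr 1
    rw [count_pow_card (by norm_num) φ hφ t, Finset.sum_range_succ, Finset.sum_range_one]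
    ring
  -- Step (d) : splitting off the trivial part
  have hstepd : (∑ t : ZMod p, (1 + φ t) * (χ (1 - t))^2)
      = ∑ t : ZMod p, φ t * (χ (1 - t))^2 := by
    have hsplit2 : (∑ t : ZMod p, (1 + φ t) * (χ (1 - t))^2)
        = (∑ t : ZMod p, (χ (1 - t))^2) + ∑ t : ZMod p, φ t * (χ (1 - t))^2 := by
      rw [← Finset.sum_add_distrib]
      exact Finset.sum_congr rfl fun t _ => by ring
    rw [hsplit2]
    have hz : (∑ t : ZMod p, (χ (1 - t))^2) = 0 := by
      have hre : (∑ t : ZMod p, (χ (1 - t))^2) = ∑ s : ZMod p, (χ s)^2 := by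
        refine Finset.sum_nbij' (i := fun t => 1 - t) (j := fun s => 1 - s)
          (fun a _ => Finset.mem_univ _) (fun a _ => Finset.mem_univ _)
          (fun a _ => by ring) (fun a _ => by ring) (fun a _ => rfl)
      rw [hre]
      have h2' : (∑ s : ZMod p, (χ s)^2) = ∑ s : ZMod p, (χ^2) s :=
        Finset.sum_congr rfl fun s _ => (χ.pow_apply' (by norm_num) s).symm
      rw [h2']
      apply MulChar.sum_eq_zero_of_ne_one
      intro hcon
      have : orderOf χ ∣ 2 := orderOf_dvd_of_pow_eq_one hcon
      rw [hχ] at this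
      norm_num at this
    rw [hz, zero_add]
  -- Step (e) : both `J2` and `∑ φ t χ(1-t)²` equal a common symmetric sum
  have hmem01 : ∀ {x : ZMod p}, x ∈ Finset.univ \ ({0, 1} : Finset (ZMod p))
      ↔ (x ≠ 0 ∧ x ≠ 1) := by
    intro x
    simp [Finset.mem_sdiff]
  have hJ2a : J2 = ∑ t ∈ Finset.univ \ ({0, 1} : Finset (ZMod p)),
      φ t * χ t * (χ (1 - t))^2 := by
    rw [hJ2def]
    have hrw : ∀ t : ZMod p, (φ * χ) t * (χ ^ 2) (1 - t) = φ t * χ t * (χ (1-t))^2 := by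
      intro t
      rw [χ.pow_apply' (by norm_num), MulChar.coeToFun_mul, Pi.mul_apply]
    rw [Finset.sum_congr rfl (fun t _ => hrw t)]
    symm
    apply Finset.sum_subset (Finset.subset_univ _)
    intro x _ hx
    have hx' : x = 0 ∨ x = 1 := by
      by_contra hcon
      push_neg at hcon
      exact hx (hmem01.mpr hcon)
    rcases hx' with rfl | rfl
    · rw [hφ0]; ring
    · rw [sub_self, hχ0]; ring
  have hJpa : (∑ t : ZMod p, φ t * (χ (1 - t))^2)
      = ∑ t ∈ Finset.univ \ ({0, 1} : Finset (ZMod p)), φ t * (χ (1 - t))^2 := by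
    symm
    apply Finset.sum_subset (Finset.subset_univ _)
    intro x _ hx
    have hx' : x = 0 ∨ x = 1 := by
      by_contra hcon
      push_neg at hcon
      exact hx (hmem01.mpr hcon)
    rcases hx' with rfl | rfl
    · rw [hφ0]; ring
    · rw [sub_self, hχ0]; ring
  -- the common value
  have hG2 : ∑ t ∈ Finset.univ \ ({0, 1} : Finset (ZMod p)), φ t * χ t * (χ (1 - t))^2
      = ∑ u ∈ Finset.univ \ ({0, 1} : Finset (ZMod p)),
          φ (-1) * (φ u * φ (1-u) * χ u) := by
    refine Finset.sum_nbij' (i := fun u => u * (u-1)⁻¹) (j := fun u => u * (u-1)⁻¹)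
      ?_ ?_ ?_ ?_ ?_
    all_goals
      intro a ha
      rw [hmem01] at ha
      obtain ⟨ha0, ha1⟩ := ha
      have hsub : a - 1 ≠ 0 := sub_ne_zero.mpr ha1
      have hsub' : (1:ZMod p) - a ≠ 0 := sub_ne_zero.mpr (Ne.symm ha1)
    · show a * (a-1)⁻¹ ∈ Finset.univ \ ({0, 1} : Finset (ZMod p))
      refine hmem01.mpr ⟨mul_ne_zero ha0 (inv_ne_zero hsub), fun hcon => ?_⟩
      have h' : a = a - 1 := by
        have hc2 := congrArg (· * (a - 1)) hcon
        simpa [mul_assoc, inv_mul_cancel₀ hsub] using hc2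
      exact (one_ne_zero : (1:ZMod p) ≠ 0) (by linear_combination h')
    · show a * (a-1)⁻¹ ∈ Finset.univ \ ({0, 1} : Finset (ZMod p))
      refine hmem01.mpr ⟨mul_ne_zero ha0 (inv_ne_zero hsub), fun hcon => ?_⟩
      have h' : a = a - 1 := by
        have hc2 := congrArg (· * (a - 1)) hcon
        simpa [mul_assoc, inv_mul_cancel₀ hsub] using hc2
      exact (one_ne_zero : (1:ZMod p) ≠ 0) (by linear_combination h')
    · show a * (a-1)⁻¹ * (a * (a-1)⁻¹ - 1)⁻¹ = a
      have hstep : a * (a-1)⁻¹ - 1 = (a-1)⁻¹ := by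
        field_simp; ring
      rw [hstep, inv_inv, mul_assoc, inv_mul_cancel₀ hsub, mul_one]
    · show a * (a-1)⁻¹ * (a * (a-1)⁻¹ - 1)⁻¹ = a
      have hstep : a * (a-1)⁻¹ - 1 = (a-1)⁻¹ := by
        field_simp; ring
      rw [hstep, inv_inv, mul_assoc, inv_mul_cancel₀ hsub, mul_one]
    · show φ a * χ a * (χ (1 - a))^2
        = φ (-1) * (φ (a * (a-1)⁻¹) * φ (1 - a * (a-1)⁻¹) * χ (a * (a-1)⁻¹))
      have h1s : (1:ZMod p) - a * (a-1)⁻¹ = ((1:ZMod p)-a)⁻¹ := by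
        field_simp; ring
      have hφσ : φ (a * (a-1)⁻¹) = φ a * (φ (-1) * φ (1-a)) := by
        rw [map_mul, phi_inv_apply φ hφ hsub,
          show a - 1 = (-1) * (1-a) by ring, map_mul]
      have hχσ : χ (a * (a-1)⁻¹) = χ a * (χ (1-a))^2 := by
        rw [map_mul, chi_inv_apply χ hχ hsub,
          show a - 1 = (-1) * (1-a) by ring, map_mul, hχm1, one_mul]
      have hφ1σ : φ (1 - a * (a-1)⁻¹) = φ (1-a) := by
        rw [h1s, phi_inv_apply φ hφ hsub']
      have he2 : (φ (-1:ZMod p))^2 = 1 := hsq hm1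
      have hb2 : (φ ((1:ZMod p)-a))^2 = 1 := hsq hsub'
      have hd3 : (χ ((1:ZMod p)-a))^3 = 1 := hcube hsub'
      rw [hφσ, hχσ, hφ1σ]
      linear_combination (-(φ a * χ a * (χ ((1:ZMod p)-a))^2 * (φ ((1:ZMod p)-a))^2)) * he2
        + (-(φ a * χ a * (χ ((1:ZMod p)-a))^2)) * hb2
  have hG1 : ∑ t ∈ Finset.univ \ ({0, 1} : Finset (ZMod p)), φ t * (χ (1 - t))^2
      = ∑ u ∈ Finset.univ \ ({0, 1} : Finset (ZMod p)),
          φ (-1) * (φ u * φ (1-u) * χ u) := by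
    refine Finset.sum_nbij' (i := fun t => ((1:ZMod p) - t)⁻¹) (j := fun v => 1 - v⁻¹)
      ?_ ?_ ?_ ?_ ?_
    all_goals
      intro a ha
      rw [hmem01] at ha
      obtain ⟨ha0, ha1⟩ := ha
      have hsub : a - 1 ≠ 0 := sub_ne_zero.mpr ha1
      have hsub' : (1:ZMod p) - a ≠ 0 := sub_ne_zero.mpr (Ne.symm ha1)
    · show ((1:ZMod p) - a)⁻¹ ∈ Finset.univ \ ({0, 1} : Finset (ZMod p))
      refine hmem01.mpr ⟨inv_ne_zero hsub', fun hcon => ?_⟩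
      rw [inv_eq_one] at hcon
      exact ha0 (by linear_combination -hcon)
    · show (1 - a⁻¹ : ZMod p) ∈ Finset.univ \ ({0, 1} : Finset (ZMod p))
      refine hmem01.mpr ⟨fun hcon => ?_, fun hcon => ?_⟩
      · have h' : a⁻¹ = 1 := by linear_combination -hcon
        rw [inv_eq_one] at h'
        exact ha1 h'
      · have h' : a⁻¹ = 0 := by linear_combination -hcon
        rw [inv_eq_zero] at h'
        exact ha0 h'
    · show 1 - (((1:ZMod p) - a)⁻¹)⁻¹ = a
      rw [inv_inv]; ring
    · show ((1:ZMod p) - (1 - a⁻¹))⁻¹ = a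
      rw [show (1:ZMod p) - (1 - a⁻¹) = a⁻¹ by ring, inv_inv]
    · show φ a * (χ (1 - a))^2
        = φ (-1) * (φ (((1:ZMod p)-a)⁻¹) * φ (1 - ((1:ZMod p)-a)⁻¹) * χ (((1:ZMod p)-a)⁻¹))
      have h1σ : (1:ZMod p) - (1-a)⁻¹ = -a * ((1:ZMod p)-a)⁻¹ := by
        field_simp; ring
      have hφρ : φ (((1:ZMod p)-a)⁻¹) = φ (1-a) := phi_inv_apply φ hφ hsub'
      have hφ1ρ : φ ((1:ZMod p) - (1-a)⁻¹) = φ (-1) * φ a * φ (1-a) := by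
        rw [h1σ, show (-a : ZMod p) = (-1) * a by ring, map_mul, map_mul,
          phi_inv_apply φ hφ hsub']
      have hχρ : χ (((1:ZMod p)-a)⁻¹) = (χ (1-a))^2 := chi_inv_apply χ hχ hsub'
      have he2 : (φ (-1:ZMod p))^2 = 1 := hsq hm1
      have hb2 : (φ ((1:ZMod p)-a))^2 = 1 := hsq hsub'
      rw [hφρ, hφ1ρ, hχρ]
      linear_combination (-((φ ((1:ZMod p)-a))^2 * φ a * (χ ((1:ZMod p)-a))^2)) * he2
        + (-(φ a * (χ ((1:ZMod p)-a))^2)) * hb2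
  -- Put the `J2` chain together
  have hJ2val : J2 = 1 + ∑ x : ZMod p, (χ (x * (x - 1) * (x - (2 : ZMod p)⁻¹)))^2 := by
    rw [hJ2a, hG2, ← hG1, ← hJpa, ← hstepd, ← hstepc, hstepa]
    linear_combination -hstepb
  -- conjugation
  have hconj : (starRingEnd ℂ) (∑ x : ZMod p, (χ (x * (x - 1) * (x - (2 : ZMod p)⁻¹)))^2)
      = ∑ x : ZMod p, χ (x * (x - 1) * (x - (2 : ZMod p)⁻¹)) := by
    rw [map_sum]
    refine Finset.sum_congr rfl fun x _ => ?_
    rw [map_pow, conj_chi χ hχ]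
    rcases eq_or_ne (x * (x - 1) * (x - (2 : ZMod p)⁻¹)) 0 with h | h
    · rw [h, hχ0]; norm_num
    · have h3 := hcube h
      linear_combination (χ (x * (x - 1) * (x - (2 : ZMod p)⁻¹))) * h3
  -- final assembly
  have hre : (2 : ℂ) * (((J1 + J2).re : ℝ) : ℂ) = (J1 + J2) + (starRingEnd ℂ) (J1 + J2) := by
    rw [Complex.add_conj]
    push_cast
    ring
  rw [hLHS, hre]
  rw [show J1 + J2 = ∑ x : ZMod p, (χ (x * (x - 1) * (x - (2 : ZMod p)⁻¹)))^2 by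
    rw [hJ1val, hJ2val]; ring]
  rw [hconj]
  ring
end

section
/- Let p be a prime with p ≡ 1 (mod 3), let x and y be integers with x² + 3y² = p, let χ be a multiplicative character of F_p of order 3 with values in ℂ, and let φ be the quadratic character of F_p. Then Re( J(χ, χ²) + J(φχ, χ²) ) = (−1)^{x+y} · (x|3) · x − 1, where (x|3) denotes the Legendre symbol of x modulo 3. (This is the paper's Corollary 3.9, stated there as p·Re[ (χ choose χ) + (φχ choose χ) ] = (−1)^{x+y}(x|3)·x − 1, translated via (χ choose χ) = χ(−1)/p · J(χ, χ²) and (φχ choose χ) = χ(−1)/p · J(φχ, χ²) with χ(−1) = 1.) -/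
open Finset Complex

noncomputable def om : ℂ := ⟨-1/2, Real.sqrt 3 / 2⟩

lemma om_re : om.re = -1/2 := rfl
lemma om_im : om.im = Real.sqrt 3 / 2 := rfl

lemma om_eq : om = (-1/2 : ℝ) + (Real.sqrt 3 / 2 : ℝ) * Complex.I := by
  apply Complex.ext <;> simp [om_re, om_im]

lemma om_sq : om ^ 2 + om + 1 = 0 := by
  have h3 : ((Real.sqrt 3 : ℝ) : ℂ) ^ 2 = 3 := by
    rw [← Complex.ofReal_pow, Real.sq_sqrt (by norm_num : (3:ℝ) ≥ 0)]; norm_num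
  have hI : (Complex.I) ^ 2 = -1 := Complex.I_sq
  rw [om_eq]
  push_cast
  linear_combination (Complex.I ^ 2 / 4) * h3 + (3 / 4 : ℂ) * hI

lemma conj_om : (starRingEnd ℂ) om = -1 - om := by
  apply Complex.ext <;> simp [om_re, om_im] <;> norm_num

lemma cube_cases {z : ℂ} (h : z ^ 3 = 1) : z = 1 ∨ z = om ∨ z = om ^ 2 := by
  have h0 : (z - 1) * ((z - om) * (z - om ^ 2)) = 0 := by
    linear_combination h + (-z ^ 2 + om * z - om + 1) * om_sq
  rcases mul_eq_zero.mp h0 with h1 | h1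
  · exact Or.inl (sub_eq_zero.mp h1)
  · rcases mul_eq_zero.mp h1 with h2 | h2
    · exact Or.inr (Or.inl (sub_eq_zero.mp h2))
    · exact Or.inr (Or.inr (sub_eq_zero.mp h2))

def InR (z : ℂ) : Prop := ∃ a b : ℤ, z = a + b * om

lemma InR_zero : InR 0 := ⟨0, 0, by push_cast; ring⟩
lemma InR_one : InR 1 := ⟨1, 0, by push_cast; ring⟩
lemma InR_om : InR om := ⟨0, 1, by push_cast; ring⟩
lemma InR_intCast (n : ℤ) : InR (n : ℂ) := ⟨n, 0, by push_cast; ring⟩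

lemma InR_add {z w : ℂ} (hz : InR z) (hw : InR w) : InR (z + w) := by
  obtain ⟨a, b, rfl⟩ := hz; obtain ⟨c, d, rfl⟩ := hw
  exact ⟨a + c, b + d, by push_cast; ring⟩

lemma InR_neg {z : ℂ} (hz : InR z) : InR (-z) := by
  obtain ⟨a, b, rfl⟩ := hz; exact ⟨-a, -b, by push_cast; ring⟩

lemma InR_mul {z w : ℂ} (hz : InR z) (hw : InR w) : InR (z * w) := by
  obtain ⟨a, b, rfl⟩ := hz; obtain ⟨c, d, rfl⟩ := hw
  refine ⟨a * c - b * d, a * d + b * c - b * d, ?_⟩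
  push_cast
  linear_combination ((b : ℂ) * d) * om_sq

lemma InR_om_sq : InR (om ^ 2) := by
  have := om_sq
  have : om ^ 2 = -1 - om := by linear_combination om_sq
  rw [this]; exact ⟨-1, -1, by push_cast; ring⟩

lemma coord_inj {a b c d : ℤ} (h : (a : ℂ) + b * om = c + d * om) : a = c ∧ b = d := by
  have him := congrArg Complex.im h
  have hre := congrArg Complex.re h
  simp only [Complex.add_im, Complex.add_re, Complex.mul_im, Complex.mul_re,
    Complex.intCast_re, Complex.intCast_im, om_re, om_im, zero_mul, mul_zero,
    add_zero, zero_add, sub_zero] at him hre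
  have hb : (b : ℝ) = (d : ℝ) := mul_right_cancel₀ (by positivity) him
  have hbz : b = d := by exact_mod_cast hb
  refine ⟨?_, hbz⟩
  have : (a : ℝ) = (c : ℝ) := by rw [hb] at hre; linarith
  exact_mod_cast this

section Char

variable {p : ℕ} [Fact p.Prime]

lemma val_pow_one (ψ : MulChar (ZMod p) ℂ) {n : ℕ} (hn : n ≠ 0) (h : ψ ^ n = 1)
    {t : ZMod p} (ht : t ≠ 0) : (ψ t) ^ n = 1 := by
  rw [← MulChar.pow_apply' ψ hn, h, MulChar.one_apply (isUnit_iff_ne_zero.mpr ht)]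

lemma InR_val (χ : MulChar (ZMod p) ℂ) (h3 : χ ^ 3 = 1) (t : ZMod p) : InR (χ t) := by
  by_cases ht : t = 0
  · rw [ht, MulChar.map_zero]; exact InR_zero
  · rcases cube_cases (val_pow_one χ three_ne_zero h3 ht) with h | h | h <;> rw [h]
    · exact InR_one
    · exact InR_om
    · exact InR_om_sq

lemma phi_val (φ : MulChar (ZMod p) ℂ) (h2 : φ ^ 2 = 1) {t : ZMod p} (ht : t ≠ 0) :
    φ t = 1 ∨ φ t = -1 := by
  have h := val_pow_one φ two_ne_zero h2 ht
  have h0 : (φ t - 1) * (φ t + 1) = 0 := by linear_combination h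
  rcases mul_eq_zero.mp h0 with h1 | h1
  · exact Or.inl (sub_eq_zero.mp h1)
  · exact Or.inr (eq_neg_of_add_eq_zero_left h1)

lemma InR_phi_val (φ : MulChar (ZMod p) ℂ) (h2 : φ ^ 2 = 1) (t : ZMod p) : InR (φ t) := by
  by_cases ht : t = 0
  · rw [ht, MulChar.map_zero]; exact InR_zero
  · rcases phi_val φ h2 ht with h | h <;> rw [h]
    · exact InR_one
    · exact InR_neg InR_one

lemma conj_val (ψ : MulChar (ZMod p) ℂ) {n : ℕ} (hn : n ≠ 0) (h : ψ ^ n = 1) (t : ZMod p) :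
    (starRingEnd ℂ) (ψ t) = ψ⁻¹ t := by
  by_cases ht : t = 0
  · rw [ht, MulChar.map_zero, MulChar.map_zero, map_zero]
  · have h1 : (ψ t) ^ n = 1 := val_pow_one ψ hn h ht
    have habs : ‖ψ t‖ = 1 := by
      have := congrArg (‖·‖) h1
      rw [norm_pow, norm_one] at this
      rcases (pow_eq_one_iff_cases.mp this) with h' | h' | h'
      · exact absurd h' hn
      · exact h'
      · have h0 : 0 ≤ ‖ψ t‖ := norm_nonneg _
        rw [h'.1] at h0; norm_num at h0
    have hmul : (starRingEnd ℂ) (ψ t) * ψ t = 1 := by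
      rw [mul_comm, Complex.mul_conj]
      norm_cast
      rw [← Complex.sq_norm, habs]; norm_num
    rw [MulChar.inv_apply_eq_inv' ψ t]
    exact eq_inv_of_mul_eq_one_left hmul

end Char

lemma key_int (p : ℕ) (hp : p.Prime) (hp3 : p % 3 = 1) (x y u v : ℤ)
    (hxy : x ^ 2 + 3 * y ^ 2 = (p : ℤ)) (huv : u ^ 2 + 3 * v ^ 2 = (p : ℤ))
    (hu : (3 : ℤ) ∣ u + 1) : u = -(legendreSym 3 x) * x := by
  haveI : Fact (Nat.Prime 3) := ⟨by norm_num⟩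
  have hpZ : Prime (p : ℤ) := Nat.prime_iff_prime_int.mp hp
  have hp0 : (0 : ℤ) < p := by exact_mod_cast hp.pos
  have key : (p : ℤ) ∣ (u * y - x * v) * (u * y + x * v) :=
    ⟨y ^ 2 - v ^ 2, by linear_combination y ^ 2 * huv - v ^ 2 * hxy⟩
  have hsq : u ^ 2 * y ^ 2 = x ^ 2 * v ^ 2 := by
    rcases hpZ.dvd_mul.mp key with h | h
    · have hb : (p : ℤ) ^ 2 = (u * x + 3 * v * y) ^ 2 + 3 * (u * y - x * v) ^ 2 := by
        linear_combination -(x ^ 2 + 3 * y ^ 2) * huv - (p : ℤ) * hxy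
      have h0 : u * y - x * v = 0 := by
        by_contra h0
        have h1 : (p : ℤ) ≤ |u * y - x * v| := Int.le_of_dvd (abs_pos.mpr h0) ((dvd_abs _ _).mpr h)
        nlinarith [_root_.sq_abs (u * y - x * v), sq_nonneg (u * x + 3 * v * y)]
      linear_combination (u * y + x * v) * h0
    · have hb : (p : ℤ) ^ 2 = (u * x - 3 * v * y) ^ 2 + 3 * (u * y + x * v) ^ 2 := by
        linear_combination -(x ^ 2 + 3 * y ^ 2) * huv - (p : ℤ) * hxy
      have h0 : u * y + x * v = 0 := by
        by_contra h0
        have h1 : (p : ℤ) ≤ |u * y + x * v| := Int.le_of_dvd (abs_pos.mpr h0) ((dvd_abs _ _).mpr h)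
        nlinarith [_root_.sq_abs (u * y + x * v), sq_nonneg (u * x - 3 * v * y)]
      linear_combination (u * y - x * v) * h0
  have hp2 : (2 : ℤ) ≤ (p : ℤ) := by exact_mod_cast hp.two_le
  have hy : y ≠ 0 := by
    rintro rfl
    have hx2 : x ^ 2 = (p : ℤ) := by linarith [hxy]
    have hdvd : (p : ℤ) ∣ x := hpZ.dvd_of_dvd_pow (n := 2) ⟨1, by linarith⟩
    obtain ⟨k, hk⟩ := hdvd
    have hk2 : (p : ℤ) = (p : ℤ) ^ 2 * k ^ 2 := by rw [hk] at hx2; linarith [hx2]; 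
    by_cases hk0 : k = 0
    · rw [hk0] at hk2; simp at hk2; omega
    · have h1 : 1 ≤ k ^ 2 := by nlinarith [Int.one_le_abs (show k ≠ 0 from hk0), _root_.sq_abs k]
      nlinarith
  have hy2 : y ^ 2 = v ^ 2 := by
    have hpy : (p : ℤ) * (y ^ 2 - v ^ 2) = 0 := by
      linear_combination hsq + v ^ 2 * hxy - y ^ 2 * huv
    have := mul_eq_zero.mp hpy
    rcases this with h | h
    · exact absurd h hp0.ne'
    · linarith [h]
  have hux : u ^ 2 = x ^ 2 := by linear_combination huv - hxy + 3 * hy2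
  have hcases : u = x ∨ u = -x := by
    have h0 : (u - x) * (u + x) = 0 := by linear_combination hux
    rcases mul_eq_zero.mp h0 with h | h
    · exact Or.inl (sub_eq_zero.mp h)
    · exact Or.inr (eq_neg_of_add_eq_zero_left h)
  have hx3 : ¬ (3 : ℤ) ∣ x := by
    rintro ⟨k, hk⟩
    have hdvd : (3 : ℤ) ∣ (p : ℤ) := ⟨3 * k ^ 2 + y ^ 2, by linear_combination (x + 3 * k) * hk - hxy⟩
    have : (3 : ℕ) ∣ p := by exact_mod_cast hdvd
    omega
  have hx30 : x % 3 = 1 ∨ x % 3 = 2 := by omega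
  have hl1 : x % 3 = 1 → legendreSym 3 x = 1 := by
    intro h
    rw [legendreSym.mod 3 x]
    norm_num
    rw [h]
    exact legendreSym.at_one 3
  have hl2 : x % 3 = 2 → legendreSym 3 x = -1 := by
    intro h
    rw [legendreSym.mod 3 x]
    norm_num
    rw [h]
    have h2 : legendreSym 3 (-1) = legendreSym 3 2 := by
      rw [legendreSym.mod 3 (-1)]; norm_num
    rw [← h2, legendreSym.at_neg_one (by norm_num)]
    exact ZMod.χ₄_nat_three_mod_four (by norm_num)
  rcases hcases with h | h <;> rcases hx30 with h3 | h3
  · exfalso; rw [h] at hu; omega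
  · rw [hl2 h3, h]; ring
  · rw [hl1 h3, h]; ring
  · exfalso; rw [h] at hu; omega

/-- Corollary 3.9: For a prime `p ≡ 1 (mod 3)` with
`x² + 3y² = p`, `χ` of order `3`, and `φ` the quadratic character,
`Re(J(χ, χ²) + J(φχ, χ²)) = (−1)^{x+y} (x|3) x − 1`. -/
theorem jacobi_sum_re_eval (p : ℕ) [Fact p.Prime] (hp3 : p % 3 = 1)
    (x y : ℤ) (hxy : x ^ 2 + 3 * y ^ 2 = (p : ℤ))
    (χ φ : MulChar (ZMod p) ℂ) (hχ : orderOf χ = 3) (hφ : orderOf φ = 2) :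
    ((∑ t : ZMod p, χ t * (χ ^ 2) (1 - t)) +
        ∑ t : ZMod p, (φ * χ) t * (χ ^ 2) (1 - t)).re =
      (-1 : ℝ) ^ (x + y) * (legendreSym 3 x : ℝ) * (x : ℝ) - 1 := by
  have hp : p.Prime := Fact.out
  -- character basics
  have hχ1 : χ ≠ 1 := by intro h; rw [h, orderOf_one] at hχ; norm_num at hχ
  have hφ1 : φ ≠ 1 := by intro h; rw [h, orderOf_one] at hφ; norm_num at hφ
  have hχ3 : χ ^ 3 = 1 := by rw [← hχ]; exact pow_orderOf_eq_one χ
  have hφ2 : φ ^ 2 = 1 := by rw [← hφ]; exact pow_orderOf_eq_one φ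
  have hχ23 : (χ ^ 2) ^ 3 = 1 := by
    rw [← pow_mul, show 2 * 3 = 3 * 2 from rfl, pow_mul, hχ3, one_pow]
  have hχ2_1 : χ ^ 2 ≠ 1 := by
    intro h
    have := orderOf_dvd_of_pow_eq_one h
    rw [hχ] at this; norm_num at this
  have hφχ1 : φ * χ ≠ 1 := by
    intro h
    have hinv : χ = φ⁻¹ := eq_inv_of_mul_eq_one_right h
    have := congrArg orderOf hinv
    rw [hχ, orderOf_inv, hφ] at this; norm_num at this
  have hmulχ : χ * χ ^ 2 = 1 := by
    have := hχ3
    rw [show (3 : ℕ) = 2 + 1 from rfl, pow_succ'] at this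
    exact this
  have hφχχ2 : (φ * χ) * χ ^ 2 ≠ 1 := by
    rw [mul_assoc, hmulχ, mul_one]; exact hφ1
  have hψ6 : (φ * χ) ^ 6 = 1 := by
    have h1 : φ ^ 6 = 1 := by rw [show (6 : ℕ) = 2 * 3 from rfl, pow_mul, hφ2, one_pow]
    have h2 : χ ^ 6 = 1 := by rw [show (6 : ℕ) = 3 * 2 from rfl, pow_mul, hχ3, one_pow]
    rw [mul_pow, h1, h2, one_mul]
  -- J(χ, χ²) = -1
  have hJ1 : jacobiSum χ (χ ^ 2) = -1 := by
    have hinv : χ⁻¹ = χ ^ 2 := inv_eq_of_mul_eq_one_right hmulχ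
    rw [← hinv, jacobiSum_nontrivial_inv hχ1]
    have hne : (-1 : ZMod p) ≠ 0 := by
      intro h; exact one_ne_zero (neg_eq_zero.mp h)
    have h2 : χ (-1) ^ 2 = 1 := by
      rw [← map_pow]; norm_num
    have h3 : χ (-1) ^ 3 = 1 := val_pow_one χ three_ne_zero hχ3 hne
    have hone : χ (-1) = 1 := by linear_combination h3 - χ (-1) * h2
    rw [hone]
  set K := jacobiSum (φ * χ) (χ ^ 2) with hKdef
  -- conjugate of K
  have hconjK : (starRingEnd ℂ) K = jacobiSum (φ * χ)⁻¹ ((χ ^ 2)⁻¹) := by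
    rw [hKdef, jacobiSum, jacobiSum, map_sum]
    refine Finset.sum_congr rfl fun t _ => ?_
    rw [map_mul, conj_val (φ * χ) (by norm_num : (6 : ℕ) ≠ 0) hψ6 t,
      conj_val (χ ^ 2) (by norm_num : (3 : ℕ) ≠ 0) hχ23 (1 - t)]
  have hnorm : K * (starRingEnd ℂ) K = (p : ℂ) := by
    rw [hconjK, hKdef]
    have hring : ringChar ℂ ≠ ringChar (ZMod p) := by
      rw [ringChar.eq_zero, ZMod.ringChar_zmod_n]
      exact hp.pos.ne
    have := jacobiSum_mul_jacobiSum_inv hring hφχ1 hχ2_1 hφχχ2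
    rw [ZMod.card p] at this
    exact this
  -- K ∈ Z[ω]
  have hKInR : InR K := by
    rw [hKdef, jacobiSum]
    refine Finset.sum_induction _ InR (fun _ _ ha hb => InR_add ha hb) InR_zero fun t _ => ?_
    rw [MulChar.mul_apply]
    exact InR_mul (InR_mul (InR_phi_val φ hφ2 t) (InR_val χ hχ3 t)) (InR_val (χ ^ 2) hχ23 (1 - t))
  -- K + 1 ≡ 0 mod 2
  have h2dvd : ∃ w : ℂ, InR w ∧ K + 1 = 2 * w := by
    have hdiff : K - jacobiSum χ (χ ^ 2) =
        ∑ t : ZMod p, ((φ * χ) t * (χ ^ 2) (1 - t) - χ t * (χ ^ 2) (1 - t)) := by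
      rw [hKdef, jacobiSum, jacobiSum, ← Finset.sum_sub_distrib]
    have hsum : ∃ w, InR w ∧ (∑ t : ZMod p,
        ((φ * χ) t * (χ ^ 2) (1 - t) - χ t * (χ ^ 2) (1 - t))) = 2 * w := by
      refine Finset.sum_induction _ (fun z => ∃ w, InR w ∧ z = 2 * w) ?_ ⟨0, InR_zero, by ring⟩ ?_
      · rintro s1 s2 ⟨w1, hw1, rfl⟩ ⟨w2, hw2, rfl⟩
        exact ⟨w1 + w2, InR_add hw1 hw2, by ring⟩
      · intro t _
        by_cases ht : t = 0
        · exact ⟨0, InR_zero, by rw [ht]; simp [MulChar.map_zero, MulChar.mul_apply]⟩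
        · rw [MulChar.mul_apply]
          rcases phi_val φ hφ2 ht with h | h
          · exact ⟨0, InR_zero, by rw [h]; ring⟩
          · exact ⟨-(χ t * (χ ^ 2) (1 - t)),
              InR_neg (InR_mul (InR_val χ hχ3 t) (InR_val (χ ^ 2) hχ23 (1 - t))),
              by rw [h]; ring⟩
    obtain ⟨w, hw, hws⟩ := hsum
    refine ⟨w, hw, ?_⟩
    rw [hJ1] at hdiff
    rw [show K + 1 = K - (-1) by ring, hdiff, hws]
  -- K + 1 ≡ 0 mod (1 - ω)
  have hK' : K = ∑ t ∈ univ \ {(0 : ZMod p), 1}, (φ * χ) t * (χ ^ 2) (1 - t) := by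
    rw [hKdef, jacobiSum]
    refine (Finset.sum_subset (Finset.subset_univ _) fun t _ ht => ?_).symm
    have : t = 0 ∨ t = 1 := by
      by_cases h0 : t = 0
      · exact Or.inl h0
      · exact Or.inr ((by simpa [Finset.mem_sdiff] using ht : ¬t = 0 → t = 1) h0)
    rcases this with rfl | rfl
    · simp [MulChar.map_zero, MulChar.mul_apply]
    · simp [MulChar.map_zero]
  have hφsum : ∑ t ∈ univ \ {(0 : ZMod p), 1}, φ t = -1 := by
    have h0 : ∑ t : ZMod p, φ t = 0 := MulChar.sum_eq_zero_of_ne_one hφ1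
    have hsd := Finset.sum_sdiff (f := fun t : ZMod p => φ t)
      (Finset.subset_univ ({0, 1} : Finset (ZMod p)))
    have h01 : (0 : ZMod p) ≠ 1 := zero_ne_one
    rw [Finset.sum_pair h01, MulChar.map_zero, map_one, zero_add, h0] at hsd
    linear_combination hsd
  have h3dvd : ∃ w : ℂ, InR w ∧ K + 1 = (1 - om) * w := by
    have heq : K + 1 = ∑ t ∈ univ \ {(0 : ZMod p), 1},
        ((φ * χ) t * (χ ^ 2) (1 - t) - φ t) := by
      rw [Finset.sum_sub_distrib, ← hK', hφsum]; ring
    rw [heq]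
    refine Finset.sum_induction _ (fun z => ∃ w, InR w ∧ z = (1 - om) * w) ?_
      ⟨0, InR_zero, by ring⟩ ?_
    · rintro s1 s2 ⟨w1, hw1, rfl⟩ ⟨w2, hw2, rfl⟩
      exact ⟨w1 + w2, InR_add hw1 hw2, by ring⟩
    · intro t ht
      rw [Finset.mem_sdiff, Finset.mem_insert, Finset.mem_singleton] at ht
      have ht0 : t ≠ 0 := fun h => ht.2 (Or.inl h)
      have ht1 : (1 : ZMod p) - t ≠ 0 := by
        intro h
        exact ht.2 (Or.inr (sub_eq_zero.mp h).symm)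
      have hη : (χ t * (χ ^ 2) (1 - t)) ^ 3 = 1 := by
        rw [mul_pow, val_pow_one χ three_ne_zero hχ3 ht0,
          val_pow_one (χ ^ 2) three_ne_zero hχ23 ht1, one_mul]
      rw [MulChar.mul_apply, mul_assoc]
      rcases cube_cases hη with h | h | h
      · exact ⟨0, InR_zero, by rw [h, mul_one]; ring⟩
      · exact ⟨-(φ t), InR_neg (InR_phi_val φ hφ2 t), by rw [h]; ring⟩
      · exact ⟨(-1 - om) * φ t,
          InR_mul ⟨-1, -1, by push_cast; ring⟩ (InR_phi_val φ hφ2 t), by rw [h]; ring⟩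
  -- extract coordinates
  obtain ⟨a, b, hKab⟩ := hKInR
  obtain ⟨w2, ⟨c, d0, rfl⟩, h2w⟩ := h2dvd
  obtain ⟨w3, ⟨e, f, rfl⟩, h3w⟩ := h3dvd
  have hc2 : ((a + 1 : ℤ) : ℂ) + (b : ℂ) * om = ((2 * c : ℤ) : ℂ) + ((2 * d0 : ℤ) : ℂ) * om := by
    push_cast
    linear_combination h2w - hKab
  obtain ⟨ha2, hb2⟩ := coord_inj hc2
  have hc3 : ((a + 1 : ℤ) : ℂ) + (b : ℂ) * om =
      ((e + f : ℤ) : ℂ) + ((2 * f - e : ℤ) : ℂ) * om := by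
    push_cast
    linear_combination h3w - hKab - (f : ℂ) * om_sq
  obtain ⟨ha3, hb3⟩ := coord_inj hc3
  have hKconj_ab : (starRingEnd ℂ) K = (a : ℂ) + (b : ℂ) * (-1 - om) := by
    rw [hKab]
    rw [map_add, map_mul, conj_om, map_intCast, map_intCast]
  have hnormC : ((a ^ 2 - a * b + b ^ 2 : ℤ) : ℂ) = ((p : ℕ) : ℂ) := by
    rw [hKconj_ab, hKab] at hnorm
    push_cast
    linear_combination hnorm + (b : ℂ) ^ 2 * om_sq
  have hnormZ : a ^ 2 - a * b + b ^ 2 = (p : ℤ) := by exact_mod_cast hnormC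
  have huvP : (a - d0) ^ 2 + 3 * d0 ^ 2 = (p : ℤ) := by
    linear_combination hnormZ + (a - b - 2 * d0) * hb2
  have hu3 : (3 : ℤ) ∣ (a - d0) + 1 := ⟨f - d0, by omega⟩
  have hkey := key_int p hp hp3 x y (a - d0) d0 hxy huvP hu3
  -- real part of K
  have hre : K.re = (a : ℝ) - (d0 : ℝ) := by
    rw [hKab]
    simp only [Complex.add_re, Complex.mul_re, Complex.intCast_re, Complex.intCast_im,
      om_re, om_im, zero_mul, sub_zero]
    have : (b : ℝ) = 2 * (d0 : ℝ) := by exact_mod_cast hb2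
    rw [this]; ring
  -- parity of x + y
  have hpodd : Odd (x ^ 2 + 3 * y ^ 2) := by
    rw [hxy]
    have hne2 : p ≠ 2 := by intro h; rw [h] at hp3; norm_num at hp3
    exact Int.odd_coe_nat p |>.mpr (hp.odd_of_ne_two hne2)
  have hoddxy : Odd (x + y) := by
    rcases Int.even_or_odd x with hx | hx <;> rcases Int.even_or_odd y with hy | hy
    · exfalso
      have hx2 : Even (x ^ 2) := by rw [sq]; exact hx.mul_right x
      have hy2 : Even (3 * y ^ 2) := by rw [sq]; exact (hy.mul_right y).mul_left 3
      exact (Int.not_odd_iff_even.mpr (hx2.add hy2)) hpodd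
    · exact hx.add_odd hy
    · exact hx.add_even hy
    · exfalso
      have hx2 : Odd (x ^ 2) := hx.pow
      have hy2 : Odd (3 * y ^ 2) := (by decide : Odd (3 : ℤ)).mul hy.pow
      exact (Int.not_odd_iff_even.mpr (hx2.add_odd hy2)) hpodd
  have hneg : (-1 : ℝ) ^ (x + y) = -1 := Odd.neg_one_zpow hoddxy
  -- assemble
  have hLHS : ((∑ t : ZMod p, χ t * (χ ^ 2) (1 - t)) +
      ∑ t : ZMod p, (φ * χ) t * (χ ^ 2) (1 - t)) = -1 + K := by
    rw [hKdef]
    rw [show (∑ t : ZMod p, χ t * (χ ^ 2) (1 - t)) = jacobiSum χ (χ ^ 2) from rfl, hJ1]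
    rfl
  rw [hLHS, Complex.add_re, Complex.neg_re, Complex.one_re, hre, hneg]
  have hfin : (a : ℝ) - (d0 : ℝ) = -(legendreSym 3 x : ℝ) * (x : ℝ) := by
    exact_mod_cast hkey
  rw [hfin]
  ring
end
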